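/- arXiv:math/0702784 — 8 statements merged into one kernel-verified Lean document; each statement's English description precedes it below -/
import Mathlib

section
/- Let E be a finite nonempty set and let P be a stochastic matrix on E. For each map β : E → E define the weight p_β = ∏_{i∈E} P_{i,β(i)} and the deterministic matrix D_β with entries (D_β)_{ij} = 1 if β(i) = j and 0 otherwise. Then p_β ≥ 0 for every β, ∑_{β : E→E} p_β = 1, and ∑_{β : E→E} p_β • D_β = P. -/
/-!
Expanding `∏ i, ∑ j, P i j = 1` by distributivity gives `∑ β, p_β = 1`. For the entry `(i, j)`
of `∑ β, p_β • D_β`, do the same expansion after replacing row `i` of `P` by its `j`-th entry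
alone: the product becomes `P i j * ∏ k ≠ i, 1 = P i j`.
-/

open Finset

section

variable {ι κ R : Type*} [Fintype ι] [DecidableEq ι] [DecidableEq κ] [CommSemiring R]

lemma prod_update_single_apply (f : ι → κ → R) (i : ι) (j : κ) (β : ι → κ) :
    ∏ k, Function.update f i (Pi.single j (f i j)) k (β k) =
      (∏ k, f k (β k)) * if β i = j then 1 else 0 := by
  have hrest : ∏ k ∈ {i}ᶜ, Function.update f i (Pi.single j (f i j)) k (β k) =
      ∏ k ∈ {i}ᶜ, f k (β k) :=
    prod_congr rfl fun k hk => by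
      rw [Function.update_of_ne (by simpa using hk)]
  rw [Fintype.prod_eq_mul_prod_compl i, hrest,
    Fintype.prod_eq_mul_prod_compl i (fun k => f k (β k)), Function.update_self]
  by_cases h : β i = j
  · subst h
    simp only [Pi.single_eq_same, if_true, mul_one]
  · simp only [Pi.single_eq_of_ne h, if_neg h, zero_mul, mul_zero]

lemma sum_prod_mul_ite_apply_eq [Fintype κ] (f : ι → κ → R) (i : ι) (j : κ) :
    ∑ β : ι → κ, (∏ k, f k (β k)) * (if β i = j then 1 else 0) =
      f i j * ∏ k ∈ {i}ᶜ, ∑ v, f k v := by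
  simp_rw [← prod_update_single_apply, ← Fintype.prod_sum,
    Fintype.prod_eq_mul_prod_compl i, Function.update_self, Fintype.sum_pi_single']
  congr 1
  exact prod_congr rfl fun k hk => by rw [Function.update_of_ne (by simpa using hk)]

end

theorem stmt0_general {E : Type*} [Fintype E] [DecidableEq E]
    (P : Matrix E E ℝ)
    (hP_nonneg : ∀ i j, 0 ≤ P i j)
    (hP_rowsum : ∀ i, ∑ j, P i j = 1) :
    (∀ β : E → E, 0 ≤ ∏ i, P i (β i)) ∧
    (∑ β : E → E, ∏ i, P i (β i)) = 1 ∧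
    (∑ β : E → E, (∏ i, P i (β i)) •
        (Matrix.of fun i j => if β i = j then (1 : ℝ) else 0)) = P := by
  refine ⟨fun β => prod_nonneg fun k _ => hP_nonneg k (β k), ?_, ?_⟩
  -- `P` is a `Matrix`, not a function, so the library lemmas need it eta-expanded.
  · rw [← Fintype.prod_sum (fun i j => P i j)]
    simp [hP_rowsum]
  · ext i j
    simp only [Matrix.sum_apply, Matrix.smul_apply, Matrix.of_apply, smul_eq_mul]
    rw [sum_prod_mul_ite_apply_eq (fun i j => P i j)]
    simp [hP_rowsum]

/-- Let `E` be a finite nonempty set and `P` a stochastic matrix on `E`.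
For each map `β : E → E` the weight `p_β = ∏ i, P i (β i)` is nonnegative, the weights sum
to `1` over all maps `β`, and `∑ β, p_β • D_β = P`, where `D_β` is the deterministic matrix
with `(D_β) i j = 1` if `β i = j` and `0` otherwise. -/
theorem stmt0 {E : Type*} [Fintype E] [Nonempty E] [DecidableEq E]
    (P : Matrix E E ℝ)
    (hP_nonneg : ∀ i j, 0 ≤ P i j)
    (hP_rowsum : ∀ i, ∑ j, P i j = 1) :
    (∀ β : E → E, 0 ≤ ∏ i, P i (β i)) ∧
    (∑ β : E → E, ∏ i, P i (β i)) = 1 ∧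
    (∑ β : E → E, (∏ i, P i (β i)) •
        (Matrix.of fun i j => if β i = j then (1 : ℝ) else 0)) = P :=
  stmt0_general P hP_nonneg hP_rowsum
end

section
/- Let E be a finite nonempty set. There exist a finite set G and a bijection φ : E × G → E × G with the following universal property: for every transition rate matrix R on E there exist a probability vector q on G and a real λ > 0 such that R = λ(P − I), where P is the stochastic matrix with entries P_{ij} = ∑_{g∈G, φᴱ(i,g)=j} q_g and φᴱ : E × G → E denotes the first component of φ. -/
/-!
Every rate matrix is `λ (P - 1)` with `P = 1 + λ⁻¹ R` stochastic once `λ > max_i (-R i i)`.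
Take `G = (E → E) × E`. A random map `f : E → E` whose values `f x` are independent with
laws `P x` sends each state `i` to `j` with probability `P i j`, so `P` is induced by
`(i, (f, k)) ↦ f i`, the coordinate `k` carrying no weight. This map is the first component of
the bijection `(i, (f, k)) ↦ (f i, (f[i ↦ k], i))`: the last output coordinate recovers `i`,
and then `f i` and `k` are read off the first two.
-/

open Finset Function Matrix

section RandomMap

variable {ι κ R : Type*} [Fintype ι] [Fintype κ] [DecidableEq ι] [CommSemiring R]
  {P : ι → κ → R}

lemma sum_prod_apply_eq_one (hP : ∀ x, ∑ y, P x y = 1) :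
    ∑ f : ι → κ, ∏ x, P x (f x) = 1 := by
  rw [← Fintype.prod_sum]
  simp [hP]

lemma sum_ite_apply_eq_prod_apply [DecidableEq κ] (hP : ∀ x, ∑ y, P x y = 1)
    (i : ι) (j : κ) :
    ∑ f : ι → κ, (if f i = j then ∏ x, P x (f x) else 0) = P i j := by
  -- expand `∏ x, ∑ y, Q x y`, where `Q` keeps only the entry `j` of row `i`
  set Q : ι → κ → R := fun x y => if x = i then (if y = j then P x y else 0) else P x y
  have hQ : ∀ f : ι → κ, ∏ x, Q x (f x) = if f i = j then ∏ x, P x (f x) else 0 := by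
    intro f
    split_ifs with hf
    · refine prod_congr rfl fun x _ => ?_
      by_cases hx : x = i <;> simp [Q, hx, hf]
    · exact prod_eq_zero (mem_univ i) (by simp [Q, hf])
  simp_rw [← hQ, ← Fintype.prod_sum]
  rw [prod_eq_single i (fun x _ hx => by simp [Q, hx, hP]) (by simp)]
  simp [Q]

end RandomMap

section

variable {E G : Type*} [DecidableEq E]

lemma exists_pos_smul_rowStochastic_sub_one [Fintype E] {R : Matrix E E ℝ}
    (hoff : ∀ i j, i ≠ j → 0 ≤ R i j) (hrow : ∀ i, ∑ j, R i j = 0) :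
    ∃ l : ℝ, 0 < l ∧ ∃ P ∈ rowStochastic ℝ E, R = l • (P - 1) := by
  have hdiag : ∀ i, R i i ≤ 0 := fun i => by
    have := hrow i
    rw [← sum_erase_add _ _ (mem_univ i)] at this
    have : 0 ≤ ∑ j ∈ univ.erase i, R i j :=
      sum_nonneg fun j hj => hoff i j (ne_of_mem_erase hj).symm
    linarith
  set l : ℝ := 1 + ∑ x, -R x x
  have hl : 0 < l :=
    add_pos_of_pos_of_nonneg one_pos (sum_nonneg fun x _ => neg_nonneg.2 (hdiag x))
  have hle : ∀ i, -R i i < l := fun i => by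
    have := single_le_sum (f := fun x => -R x x) (fun x _ => neg_nonneg.2 (hdiag x)) (mem_univ i)
    simp only [l]; linarith
  refine ⟨l, hl, 1 + l⁻¹ • R, mem_rowStochastic_iff_sum.2 ⟨fun i j => ?_, fun i => ?_⟩, ?_⟩
  · rcases eq_or_ne i j with rfl | hij
    · have : -1 < l⁻¹ * R i i := by
        rw [← div_eq_inv_mul, lt_div_iff₀ hl]; linarith [hle i]
      simp only [Matrix.add_apply, one_apply_eq, Matrix.smul_apply, smul_eq_mul]; linarith
    · simpa [one_apply_ne hij] using mul_nonneg (inv_nonneg.2 hl.le) (hoff i j hij)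
  · simp [sum_add_distrib, ← mul_sum, hrow i, one_apply]
  · rw [add_sub_cancel_left, smul_smul, mul_inv_cancel₀ hl.ne', one_smul]

section Induced

variable [Fintype G]

def inducedMatrix (φ : Equiv.Perm (E × G)) (q : G → ℝ) : Matrix E E ℝ :=
  of fun i j => ∑ g, if (φ (i, g)).1 = j then q g else 0

def Matrix.IsInducedBy (P : Matrix E E ℝ) (φ : Equiv.Perm (E × G)) : Prop :=
  ∃ q : G → ℝ, (∀ g, 0 ≤ q g) ∧ ∑ g, q g = 1 ∧ inducedMatrix φ q = P

lemma Matrix.IsInducedBy.permCongr {G' : Type*} [Fintype G'] {P : Matrix E E ℝ}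
    {φ : Equiv.Perm (E × G)} (h : P.IsInducedBy φ) (e : G ≃ G') :
    P.IsInducedBy (((Equiv.refl E).prodCongr e).permCongr φ) := by
  obtain ⟨q, hq0, hq1, rfl⟩ := h
  refine ⟨fun g => q (e.symm g), fun g => hq0 _, (e.symm.sum_comp q).trans hq1, ?_⟩
  ext i j
  exact e.symm.sum_comp (fun g => if (φ (i, g)).1 = j then q g else 0)

end Induced

def randomMapShift (E : Type*) [DecidableEq E] : Equiv.Perm (E × (E → E) × E) where
  toFun p := (p.2.1 p.1, update p.2.1 p.1 p.2.2, p.1)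
  invFun p := (p.2.2, update p.2.1 p.2.2 p.1, p.2.1 p.2.2)
  left_inv := fun ⟨i, f, k⟩ => by simp
  right_inv := fun ⟨j, f, i⟩ => by simp

@[simp]
lemma randomMapShift_apply_fst (i : E) (f : E → E) (k : E) :
    (randomMapShift E (i, f, k)).1 = f i := rfl

lemma isInducedBy_randomMapShift [Fintype E] [Nonempty E] {P : Matrix E E ℝ}
    (hP : P ∈ rowStochastic ℝ E) : P.IsInducedBy (randomMapShift E) := by
  obtain ⟨hP0, hP1⟩ := mem_rowStochastic_iff_sum.1 hP
  let k₀ : E := Classical.arbitrary E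
  refine ⟨fun g => if g.2 = k₀ then ∏ x, P x (g.1 x) else 0, fun g => ?_, ?_, ?_⟩
  · dsimp only
    split_ifs
    exacts [prod_nonneg fun x _ => hP0 _ _, le_rfl]
  · simp [Fintype.sum_prod_type, sum_prod_apply_eq_one hP1]
  · ext i j
    simp [inducedMatrix, Fintype.sum_prod_type, sum_ite_apply_eq_prod_apply hP1]

end

/-- For every finite nonempty set `E` there exist a finite set `G` and a
bijection `φ : E × G → E × G` such that for every transition rate matrix `R` on `E` there
are a probability vector `q` on `G` and a rate `λ > 0` with `R = λ (P − I)`, where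
`P i j = ∑_{g : φᴱ(i,g) = j} q g` and `φᴱ` is the first component of `φ`. -/
theorem stmt3 {E : Type*} [Fintype E] [Nonempty E] [DecidableEq E] :
    ∃ (G : Type) (instG : Fintype G) (φ : (E × G) ≃ (E × G)),
      ∀ R : Matrix E E ℝ,
        (∀ i j, i ≠ j → 0 ≤ R i j) → (∀ i, ∑ j, R i j = 0) →
        ∃ (q : G → ℝ) (l : ℝ),
          (∀ g, 0 ≤ q g) ∧ (∑ g ∈ @Finset.univ G instG, q g) = 1 ∧ 0 < l ∧
          R = l • ((Matrix.of fun i j =>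
              ∑ g ∈ @Finset.univ G instG, if (φ (i, g)).1 = j then q g else 0) - 1) := by
  let e := Fintype.equivFin ((E → E) × E)
  refine ⟨Fin _, inferInstance, ((Equiv.refl E).prodCongr e).permCongr (randomMapShift E),
    fun R hoff hrow => ?_⟩
  obtain ⟨l, hl, P, hP, rfl⟩ := exists_pos_smul_rowStochastic_sub_one hoff hrow
  obtain ⟨q, hq0, hq1, hqP⟩ := (isInducedBy_randomMapShift hP).permCongr e
  exact ⟨q, l, hq0, hq1, hl, by rw [← hqP]; rfl⟩
end

section
/- Let E and G be finite nonempty sets, u : E × G → E a map, q a probability vector on G, and k ∈ E. Let (Ω, 𝓕, ℙ) be a probability space carrying an i.i.d. sequence (Y_n)_{n≥1} of G-valued random variables, each distributed according to q. Define X_0 = k and X_n = u(X_{n−1}, Y_n) for n ≥ 1, and let 𝓕*_n = σ(Y_1, …, Y_n) (with 𝓕*_0 trivial). Then for every n ≥ 0, m ≥ 0 and every function f : E → ℝ, the conditional expectation satisfies E[f(X_{n+m}) | 𝓕*_n] = (P^m f)(X_n) almost surely, where P is the stochastic matrix with entries P_{ij} = ∑_{g∈G, u(i,g)=j} q_g and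 (P^m f)(i) = ∑_j (P^m)_{ij} f(j). -/
/-!
`X_n` is a function of `Y_0, …, Y_{n-1}`, while `Y_n` is independent of them. Conditioning
`f (X_{n+1}) = f (u (X_n, Y_n))` on the past therefore freezes `X_n` and averages over the law `q`
of `Y_n`, which gives `(P f)(X_n)`. The `m`-step formula follows by induction on `m` from the
tower property.
-/

open MeasureTheory ProbabilityTheory Matrix

lemma integrable_comp_of_finite {Ω E : Type*} {mΩ : MeasurableSpace Ω} {μ : Measure Ω}
    [IsFiniteMeasure μ] [MeasurableSpace E] [Finite E] [MeasurableSingletonClass E]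
    {X : Ω → E} (hX : Measurable X) (f : E → ℝ) :
    Integrable (fun ω => f (X ω)) μ :=
  Integrable.of_finite.comp_measurable hX

lemma stronglyMeasurable_comp_of_discrete {Ω E : Type*} {m : MeasurableSpace Ω}
    [MeasurableSpace E] [DiscreteMeasurableSpace E] {X : Ω → E} (hX : Measurable[m] X)
    (f : E → ℝ) : StronglyMeasurable[m] (fun ω => f (X ω)) :=
  (Measurable.of_discrete.comp hX).stronglyMeasurable

section Freezing

variable {Ω G : Type*} {m mΩ : MeasurableSpace Ω} {μ : Measure Ω} [IsFiniteMeasure μ]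
  [MeasurableSpace G] [MeasurableSingletonClass G] {Z : Ω → G}

lemma condExp_indicator_preimage_singleton_of_indep (hm : m ≤ mΩ) (hZ : Measurable Z)
    (hindep : Indep (MeasurableSpace.comap Z ‹_›) m μ) (g : G) :
    μ[(Z ⁻¹' {g}).indicator 1 | m] =ᵐ[μ] fun _ => μ.real (Z ⁻¹' {g}) := by
  rw [← integral_indicator_one (hZ (measurableSet_singleton g))]
  exact condExp_indep_eq hZ.comap_le hm
    (stronglyMeasurable_one.indicator ⟨{g}, measurableSet_singleton g, rfl⟩) hindep

theorem condExp_eval_of_indep [Fintype G] (hm : m ≤ mΩ) (hZ : Measurable Z)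
    (hindep : Indep (MeasurableSpace.comap Z ‹_›) m μ) {W : G → Ω → ℝ}
    (hW : ∀ g, StronglyMeasurable[m] (W g)) (hWint : ∀ g, Integrable (W g) μ) :
    μ[fun ω => W (Z ω) ω | m] =ᵐ[μ] fun ω => ∑ g, μ.real (Z ⁻¹' {g}) * W g ω := by
  classical
  set I : G → Ω → ℝ := fun g => (Z ⁻¹' {g}).indicator 1
  have hI : ∀ g, Integrable (I g) μ := fun g =>
    (integrable_const 1).indicator (hZ (measurableSet_singleton g))
  have hWI : ∀ g, Integrable (W g * I g) μ := fun g => by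
    have : W g * I g = (Z ⁻¹' {g}).indicator (W g) := by
      ext ω; simp [I, Set.indicator_apply]
    exact this ▸ (hWint g).indicator (hZ (measurableSet_singleton g))
  have hdecomp : (fun ω => W (Z ω) ω) = ∑ g, W g * I g := by
    ext ω; simp [I, Set.indicator_apply]
  calc μ[fun ω => W (Z ω) ω | m]
      =ᵐ[μ] ∑ g, μ[W g * I g | m] := hdecomp ▸ condExp_finsetSum (fun g _ => hWI g) m
    _ =ᵐ[μ] ∑ g, W g * μ[I g | m] := eventuallyEq_sum fun g _ =>
        condExp_mul_of_stronglyMeasurable_left (hW g) (hWI g) (hI g)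
    _ =ᵐ[μ] fun ω => ∑ g, μ.real (Z ⁻¹' {g}) * W g ω := by
        have := ae_all_iff.2 fun g =>
          condExp_indicator_preimage_singleton_of_indep hm hZ hindep g
        filter_upwards [this] with ω hω
        simp only [Finset.sum_apply, Pi.mul_apply, I, hω, mul_comm]

end Freezing

def transitionMatrix {E G : Type*} [Fintype G] [DecidableEq E] (u : E × G → E) (q : G → ℝ) :
    Matrix E E ℝ :=
  Matrix.of fun i j => ∑ g, if u (i, g) = j then q g else 0

lemma transitionMatrix_mulVec {E G : Type*} [Fintype E] [Fintype G] [DecidableEq E]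
    (u : E × G → E) (q : G → ℝ) (f : E → ℝ) (i : E) :
    (transitionMatrix u q *ᵥ f) i = ∑ g, q g * f (u (i, g)) := by
  simp only [mulVec, dotProduct, transitionMatrix, of_apply, Finset.sum_mul, ite_mul, zero_mul]
  rw [Finset.sum_comm]
  simp

section RandomRecursion

variable {Ω G : Type*} {mΩ : MeasurableSpace Ω} [mG : MeasurableSpace G] {Y : ℕ → Ω → G}

def pastFiltration (hY : ∀ n, Measurable (Y n)) : Filtration ℕ mΩ where
  seq n := ⨆ i ∈ Finset.range n, MeasurableSpace.comap (Y i) mG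
  mono' _ _ hmn := biSup_mono fun _ hi =>
    Finset.mem_range.2 ((Finset.mem_range.1 hi).trans_le hmn)
  le' _ := iSup₂_le fun i _ => (hY i).comap_le

variable (hY : ∀ n, Measurable (Y n))

lemma comap_le_pastFiltration_succ (n : ℕ) :
    MeasurableSpace.comap (Y n) mG ≤ pastFiltration hY (n + 1) :=
  le_biSup (fun i => MeasurableSpace.comap (Y i) mG) (Finset.self_mem_range_succ n)

lemma indep_comap_pastFiltration {μ : Measure Ω} (hindep : iIndepFun Y μ) (n : ℕ) :
    Indep (MeasurableSpace.comap (Y n) mG) (pastFiltration hY n) μ := by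
  have h := indep_iSup_of_disjoint (fun i => (hY i).comap_le)
    ((iIndepFun_iff_iIndep _ _ _).1 hindep) (S := {n}) (T := {i | i < n})
    (by simp)
  simpa [pastFiltration, Finset.mem_range] using h

lemma measurable_pastFiltration_of_recursion {E : Type*} [MeasurableSpace E]
    {u : E × G → E} (hu : Measurable u) {k : E} {X : ℕ → Ω → E} (hX0 : ∀ ω, X 0 ω = k)
    (hX : ∀ n ω, X (n + 1) ω = u (X n ω, Y n ω)) (n : ℕ) :
    Measurable[pastFiltration hY n] (X n) := by
  induction n with
  | zero => rw [show X 0 = fun _ => k from funext hX0]; exact measurable_const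
  | succ n ih =>
    rw [show X (n + 1) = fun ω => u (X n ω, Y n ω) from funext (hX n)]
    exact hu.comp ((ih.mono ((pastFiltration hY).mono n.le_succ) le_rfl).prodMk
      ((comap_measurable (Y n)).mono (comap_le_pastFiltration_succ hY n) le_rfl))

theorem condExp_succ_eq_transitionMatrix_mulVec {E : Type*} {μ : Measure Ω} [IsFiniteMeasure μ]
    [Fintype E] [DecidableEq E] [MeasurableSpace E] [DiscreteMeasurableSpace E] [Fintype G]
    [MeasurableSingletonClass G] {u : E × G → E} {q : G → ℝ} (hq0 : ∀ g, 0 ≤ q g)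
    (hindep : iIndepFun Y μ)
    (hlaw : ∀ n g, μ {ω | Y n ω = g} = ENNReal.ofReal (q g)) {X : ℕ → Ω → E}
    (hXmeas : ∀ n, Measurable[pastFiltration hY n] (X n))
    (hX : ∀ n ω, X (n + 1) ω = u (X n ω, Y n ω)) (n : ℕ) (f : E → ℝ) :
    μ[fun ω => f (X (n + 1) ω) | pastFiltration hY n]
      =ᵐ[μ] fun ω => (transitionMatrix u q *ᵥ f) (X n ω) := by
  have hlaw_real : ∀ g, μ.real (Y n ⁻¹' {g}) = q g := fun g => by
    rw [measureReal_def, show Y n ⁻¹' {g} = {ω | Y n ω = g} from rfl, hlaw n g,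
      ENNReal.toReal_ofReal (hq0 g)]
  have hfreeze := condExp_eval_of_indep ((pastFiltration hY).le n) (hY n)
    (indep_comap_pastFiltration hY hindep n) (W := fun g ω => f (u (X n ω, g)))
    (fun g => stronglyMeasurable_comp_of_discrete (hXmeas n) fun e => f (u (e, g)))
    (fun g => integrable_comp_of_finite ((hXmeas n).mono ((pastFiltration hY).le n) le_rfl)
      fun e => f (u (e, g)))
  simpa only [hX, transitionMatrix_mulVec, hlaw_real] using hfreeze

end RandomRecursion

theorem condExp_comp_add_eq_pow_mulVec {Ω E : Type*} {mΩ : MeasurableSpace Ω} {μ : Measure Ω}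
    [IsFiniteMeasure μ] [MeasurableSpace E] [DiscreteMeasurableSpace E] [Fintype E]
    [DecidableEq E] (F : Filtration ℕ mΩ) (P : Matrix E E ℝ)
    {X : ℕ → Ω → E} (hX : ∀ n, Measurable[F n] (X n))
    (hstep : ∀ n (f : E → ℝ),
      μ[fun ω => f (X (n + 1) ω) | F n] =ᵐ[μ] fun ω => (P *ᵥ f) (X n ω))
    (n m : ℕ) (f : E → ℝ) :
    μ[fun ω => f (X (n + m) ω) | F n] =ᵐ[μ] fun ω => (P ^ m *ᵥ f) (X n ω) := by
  induction m generalizing n with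
  | zero =>
    simp only [add_zero, pow_zero, one_mulVec]
    exact .of_eq <| condExp_of_stronglyMeasurable (F.le n)
      (stronglyMeasurable_comp_of_discrete (hX n) f)
      (integrable_comp_of_finite ((hX n).mono (F.le n) le_rfl) f)
  | succ m ih =>
    calc μ[fun ω => f (X (n + (m + 1)) ω) | F n]
        =ᵐ[μ] μ[μ[fun ω => f (X (n + 1 + m) ω) | F (n + 1)] | F n] := by
          rw [add_comm m, ← add_assoc]
          exact (condExp_condExp_of_le (F.mono n.le_succ) (F.le _)).symm
      _ =ᵐ[μ] μ[fun ω => (P ^ m *ᵥ f) (X (n + 1) ω) | F n] := condExp_congr_ae (ih (n + 1))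
      _ =ᵐ[μ] fun ω => (P *ᵥ (P ^ m *ᵥ f)) (X n ω) := hstep n _
      _ = fun ω => (P ^ (m + 1) *ᵥ f) (X n ω) := by rw [pow_succ', ← mulVec_mulVec]

/-- Here `Y n` is the paper's `Y_{n+1}`, so the σ-algebra conditioned on is `σ(Y_1, …, Y_n)`. -/
theorem stmt6_general {E G : Type*} [Fintype E] [Fintype G]
    [DecidableEq E]
    [mG : MeasurableSpace G] [MeasurableSingletonClass G]
    (u : E × G → E) (q : G → ℝ) (hq0 : ∀ g, 0 ≤ q g) (k : E)
    {Ω : Type*} [MeasurableSpace Ω] (μ : Measure Ω) [IsProbabilityMeasure μ]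
    (Y : ℕ → Ω → G) (hYmeas : ∀ n, Measurable (Y n))
    (hYindep : iIndepFun Y μ)
    (hYlaw : ∀ n g, μ {ω | Y n ω = g} = ENNReal.ofReal (q g))
    (X : ℕ → Ω → E) (hX0 : ∀ ω, X 0 ω = k)
    (hX : ∀ n ω, X (n + 1) ω = u (X n ω, Y n ω)) :
    ∀ (n m : ℕ) (f : E → ℝ),
      μ[fun ω => f (X (n + m) ω) |
          ⨆ i ∈ Finset.range n, MeasurableSpace.comap (Y i) mG]
        =ᵐ[μ] fun ω =>
          ∑ j, ((Matrix.of fun i j' => ∑ g, if u (i, g) = j' then q g else 0) ^ m)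
            (X n ω) j * f j := by
  let _ : MeasurableSpace E := ⊤
  have hXmeas := measurable_pastFiltration_of_recursion hYmeas Measurable.of_discrete hX0 hX
  exact condExp_comp_add_eq_pow_mulVec (pastFiltration hYmeas) (transitionMatrix u q) hXmeas
    (condExp_succ_eq_transitionMatrix_mulVec hYmeas hq0 hYindep hYlaw hXmeas hX)

/-- In the setting of Statement 5, with `𝓕*_n = σ(Y_1, …, Y_n)` (trivial
for `n = 0`; here `Y n` stands for `Y_{n+1}`), for all `n, m ≥ 0` and `f : E → ℝ`,
`E[f (X_{n+m}) | 𝓕*_n] = (P^m f) (X_n)` a.s., where `P i j = ∑_{g : u(i,g) = j} q g` and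
`(P^m f) i = ∑ j, (P^m) i j * f j`. -/
theorem stmt6 {E G : Type*} [Fintype E] [Fintype G] [Nonempty E] [Nonempty G]
    [DecidableEq E] [DecidableEq G]
    [mG : MeasurableSpace G] [MeasurableSingletonClass G]
    (u : E × G → E) (q : G → ℝ) (hq0 : ∀ g, 0 ≤ q g) (hq1 : ∑ g, q g = 1) (k : E)
    {Ω : Type*} [MeasurableSpace Ω] (μ : Measure Ω) [IsProbabilityMeasure μ]
    (Y : ℕ → Ω → G) (hYmeas : ∀ n, Measurable (Y n))
    (hYindep : iIndepFun Y μ)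
    (hYlaw : ∀ n g, μ {ω | Y n ω = g} = ENNReal.ofReal (q g))
    (X : ℕ → Ω → E) (hX0 : ∀ ω, X 0 ω = k)
    (hX : ∀ n ω, X (n + 1) ω = u (X n ω, Y n ω)) :
    ∀ (n m : ℕ) (f : E → ℝ),
      μ[fun ω => f (X (n + m) ω) |
          ⨆ i ∈ Finset.range n, MeasurableSpace.comap (Y i) mG]
        =ᵐ[μ] fun ω =>
          ∑ j, ((Matrix.of fun i j' => ∑ g, if u (i, g) = j' then q g else 0) ^ m)
            (X n ω) j * f j :=
  stmt6_general (mG := mG) u q hq0 k μ Y hYmeas hYindep hYlaw X hX0 hX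
end

section
/- Let λ > 0 and let (ξ_n)_{n≥1} be an i.i.d. sequence of real random variables on a probability space (Ω, 𝓕, ℙ), each exponentially distributed with rate λ. Set T_n = ξ_1 + ⋯ + ξ_n. Then for every t ≥ 0 the random variable N_t = #{n ≥ 1 : T_n ≤ t} is almost surely finite and has Poisson distribution with parameter λt, i.e. ℙ(N_t = m) = e^{−λt} (λt)^m / m! for every m ∈ ℕ. -/
/-!
Because the `ξ i` are a.s. nonnegative, the partial sums `T_m` are a.s. nondecreasing, so
`N_t = m` exactly when `T_m ≤ t < T_{m+1}`. Convolving exponential densities shows that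
`T_{n+1}` has the Erlang law `Γ(n+1, λ)`; as `ξ_{m+1}` is independent of `T_m`,
`ℙ(T_m ≤ t < T_m + ξ_{m+1}) = ∫_0^t f_{T_m}(x) e^{-λ(t-x)} dx = e^{-λt} (λt)^m / m!`.
These probabilities sum to one, so a.s. exactly one of these events occurs, which also makes
`N_t` a.s. finite.
-/

open MeasureTheory ProbabilityTheory Set Function
open scoped ENNReal Nat

lemma gammaPDF_natCast_add_one (n : ℕ) (r x : ℝ) :
    gammaPDF (n + 1) r x =
      ENNReal.ofReal (if 0 ≤ x then r ^ (n + 1) * x ^ n * Real.exp (-(r * x)) / n ! else 0) := by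
  rw [gammaPDF_eq, Real.Gamma_nat_eq_factorial, add_sub_cancel_right]
  norm_cast
  split_ifs <;> ring_nf

@[fun_prop]
lemma measurable_gammaPDF (a r : ℝ) : Measurable (gammaPDF a r) :=
  (measurable_gammaPDFReal a r).ennreal_ofReal

lemma expMeasure_Ioi {r : ℝ} (hr : 0 < r) {s : ℝ} (hs : 0 ≤ s) :
    expMeasure r (Ioi s) = ENNReal.ofReal (Real.exp (-(r * s))) := by
  have := isProbabilityMeasure_expMeasure hr
  rw [← compl_Iic, prob_compl_eq_one_sub measurableSet_Iic, ← ofReal_cdf, cdf_expMeasure_eq hr,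
    if_pos hs, ← ENNReal.ofReal_one,
    ← ENNReal.ofReal_sub _ (sub_nonneg.2 (Real.exp_le_one_iff.2 (by nlinarith)))]
  ring_nf

lemma setLIntegral_Icc_ofReal_mul_pow (c : ℝ) (n : ℕ) {z : ℝ} (hc : 0 ≤ c) (hz : 0 ≤ z) :
    ∫⁻ x in Icc 0 z, ENNReal.ofReal (c * x ^ n) = ENNReal.ofReal (c * z ^ (n + 1) / (n + 1)) := by
  rw [setLIntegral_congr Ioc_ae_eq_Icc.symm, ← ofReal_integral_eq_lintegral_ofReal,
    ← intervalIntegral.integral_of_le hz, intervalIntegral.integral_const_mul, integral_pow]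
  · simp [mul_div_assoc]
  · exact (continuous_const.mul (continuous_pow n)).integrableOn_Ioc
  · filter_upwards [self_mem_ae_restrict measurableSet_Ioc] with x hx
    exact mul_nonneg hc (pow_nonneg hx.1.le n)

lemma setLIntegral_gammaPDF_mul_exp_sub (n : ℕ) {r z : ℝ} (hr : 0 ≤ r) (hz : 0 ≤ z) :
    ∫⁻ x in Iic z, gammaPDF (n + 1) r x * ENNReal.ofReal (Real.exp (-(r * (z - x)))) =
      ENNReal.ofReal (Real.exp (-(r * z)) * (r * z) ^ (n + 1) / (n + 1)!) := by
  have hneg : ∫⁻ x in Iio 0, gammaPDF (n + 1) r x * ENNReal.ofReal (Real.exp (-(r * (z - x))))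
      = 0 := by
    rw [setLIntegral_congr_fun measurableSet_Iio fun x hx ↦ by rw [gammaPDF_of_neg hx, zero_mul],
      lintegral_zero]
  have hpos : ∀ x ∈ Icc 0 z, gammaPDF (n + 1) r x * ENNReal.ofReal (Real.exp (-(r * (z - x))))
      = ENNReal.ofReal (r ^ (n + 1) * Real.exp (-(r * z)) / n ! * x ^ n) := by
    intro x hx
    have hx0 := hx.1
    rw [gammaPDF_natCast_add_one, if_pos hx0, ← ENNReal.ofReal_mul (by positivity)]
    congr 1
    have hexp : Real.exp (-(r * x)) * Real.exp (-(r * (z - x))) = Real.exp (-(r * z)) := by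
      rw [← Real.exp_add]; ring_nf
    rw [← hexp]; ring
  rw [lintegral_Iic_eq_lintegral_Iio_add_Icc _ hz, hneg, zero_add,
    setLIntegral_congr_fun measurableSet_Icc hpos,
    setLIntegral_Icc_ofReal_mul_pow _ _ (by positivity) hz]
  congr 1
  rw [Nat.factorial_succ]
  push_cast
  field_simp
  ring

theorem withDensity_conv_withDensity {G : Type*} [AddCommGroup G] [MeasurableSpace G]
    [MeasurableAdd₂ G] [MeasurableNeg G] {μ : Measure G} [SFinite μ] [μ.IsAddRightInvariant]
    {f g : G → ℝ≥0∞} (hf : Measurable f) (hg : Measurable g) :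
    μ.withDensity f ∗ μ.withDensity g = μ.withDensity (fun z ↦ ∫⁻ x, f x * g (z - x) ∂μ) := by
  ext s hs
  have h1 : Measurable (s.indicator (1 : G → ℝ≥0∞)) := measurable_one.indicator hs
  calc (μ.withDensity f ∗ μ.withDensity g) s
      = ∫⁻ x, ∫⁻ y, s.indicator 1 (x + y) ∂μ.withDensity g ∂μ.withDensity f := by
        rw [← lintegral_indicator_one hs, Measure.lintegral_conv h1]
    _ = ∫⁻ x, ∫⁻ y, f x * (g y * s.indicator 1 (x + y)) ∂μ ∂μ := by
        rw [lintegral_withDensity_eq_lintegral_mul _ hf (by fun_prop)]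
        refine lintegral_congr fun x ↦ ?_
        rw [Pi.mul_apply, lintegral_withDensity_eq_lintegral_mul _ hg (by fun_prop),
          ← lintegral_const_mul _ (by fun_prop)]
        rfl
    _ = ∫⁻ x, ∫⁻ z, f x * g (z - x) * s.indicator 1 z ∂μ ∂μ := by
        refine lintegral_congr fun x ↦ ?_
        rw [← lintegral_sub_right_eq_self _ x]
        simp only [add_sub_cancel, mul_assoc]
    _ = ∫⁻ z in s, ∫⁻ x, f x * g (z - x) ∂μ ∂μ := by
        rw [lintegral_lintegral_swap (by fun_prop), ← lintegral_indicator hs]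
        refine lintegral_congr fun z ↦ ?_
        by_cases hz : z ∈ s <;> simp [hz]
    _ = μ.withDensity (fun z ↦ ∫⁻ x, f x * g (z - x) ∂μ) s := (withDensity_apply _ hs).symm

-- The shape parameter is written `↑(n + 1) + 1`, the form the induction on `n` produces.
theorem gammaMeasure_conv_expMeasure (n : ℕ) {r : ℝ} (hr : 0 < r) :
    gammaMeasure (n + 1) r ∗ expMeasure r = gammaMeasure ((n + 1 : ℕ) + 1) r := by
  rw [expMeasure, gammaMeasure, gammaMeasure, gammaMeasure,
    withDensity_conv_withDensity (measurable_gammaPDF _ _) (measurable_gammaPDF _ _)]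
  congr 1
  funext z
  rcases lt_or_ge z 0 with hz | hz
  · rw [gammaPDF_of_neg hz]
    refine (lintegral_congr fun x ↦ ?_).trans lintegral_zero
    rcases lt_or_ge x 0 with hx | hx
    · rw [gammaPDF_of_neg hx, zero_mul]
    · rw [gammaPDF_of_neg (by linarith : z - x < 0), mul_zero]
  · have hsupp : ∀ x, gammaPDF (n + 1) r x * gammaPDF 1 r (z - x) =
        (Iic z).indicator (fun x ↦ ENNReal.ofReal r *
          (gammaPDF (n + 1) r x * ENNReal.ofReal (Real.exp (-(r * (z - x)))))) x := by
      intro x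
      rcases lt_or_ge z x with hx | hx
      · rw [indicator_of_notMem (show x ∉ Iic z from not_le.2 hx),
          gammaPDF_of_neg (sub_neg.2 hx), mul_zero]
      · rw [indicator_of_mem (mem_Iic.2 hx),
          show gammaPDF 1 r (z - x) = _ from exponentialPDF_of_nonneg (sub_nonneg.2 hx),
          ENNReal.ofReal_mul hr.le]
        ring
    rw [lintegral_congr hsupp, lintegral_indicator measurableSet_Iic,
      lintegral_const_mul _ (by fun_prop), setLIntegral_gammaPDF_mul_exp_sub n hr.le hz,
      ← ENNReal.ofReal_mul hr.le, gammaPDF_natCast_add_one, if_pos hz]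
    congr 1
    ring

theorem setOf_succ_le_eq_Iio {α : Type*} [LinearOrder α] {s : ℕ → α} (hs : Monotone s) {t : α}
    {m : ℕ} (hm : s m ≤ t) (hm' : t < s (m + 1)) : {n | s (n + 1) ≤ t} = Iio m := by
  ext n
  simp only [mem_ofPred_eq, mem_Iio]
  constructor
  · intro hn
    by_contra! hmn
    exact hm'.not_ge ((hs (by omega)).trans hn)
  · intro hn
    exact (hs (by omega)).trans hm

lemma tsum_ofReal_poisson {r : ℝ} (hr : 0 ≤ r) :
    ∑' m : ℕ, ENNReal.ofReal (Real.exp (-r) * r ^ m / m !) = 1 := by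
  have h : HasSum (fun m : ℕ ↦ Real.exp (-r) * r ^ m / m !) 1 :=
    hasSum_one_poissonMeasure ⟨r, hr⟩
  rw [← ENNReal.ofReal_tsum_of_nonneg (fun m ↦ by positivity) h.summable, h.tsum_eq,
    ENNReal.ofReal_one]

section

variable {Ω : Type*} [MeasurableSpace Ω] {μ : Measure Ω}

lemma ae_nonneg_of_hasLaw_expMeasure {X : Ω → ℝ} {r : ℝ} (hX : HasLaw X (expMeasure r) μ) :
    ∀ᵐ ω ∂μ, 0 ≤ X ω := by
  rw [hX.ae_iff (p := fun x : ℝ ↦ 0 ≤ x) measurableSet_Ici.mem, ae_iff]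
  simp only [not_le]
  rw [expMeasure, gammaMeasure, Iio_def, withDensity_apply _ measurableSet_Iio]
  exact lintegral_gammaPDF_of_nonpos le_rfl

theorem measure_le_lt_add_eq_setLIntegral [IsFiniteMeasure μ] {X Y : Ω → ℝ} {r t : ℝ}
    (hr : 0 < r) (hX : Measurable X) (hY : HasLaw Y (expMeasure r) μ) (hXY : IndepFun X Y μ) :
    μ {ω | X ω ≤ t ∧ t < X ω + Y ω} =
      ∫⁻ x in Iic t, ENNReal.ofReal (Real.exp (-(r * (t - x)))) ∂μ.map X := by
  have := isProbabilityMeasure_expMeasure hr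
  have hS : MeasurableSet {p : ℝ × ℝ | p.1 ≤ t ∧ t < p.1 + p.2} := by measurability
  have hsection : ∀ x, expMeasure r (Prod.mk x ⁻¹' {p : ℝ × ℝ | p.1 ≤ t ∧ t < p.1 + p.2}) =
      (Iic t).indicator (fun x ↦ ENNReal.ofReal (Real.exp (-(r * (t - x))))) x := by
    intro x
    rcases le_or_gt x t with hx | hx
    · rw [indicator_of_mem (mem_Iic.2 hx), ← expMeasure_Ioi hr (sub_nonneg.2 hx)]
      congr 1
      ext y
      simp [hx, sub_lt_iff_lt_add']
    · rw [indicator_of_notMem (show x ∉ Iic t from not_le.2 hx)]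
      simp [hx.not_ge]
  calc μ {ω | X ω ≤ t ∧ t < X ω + Y ω}
      = μ.map (fun ω ↦ (X ω, Y ω)) {p : ℝ × ℝ | p.1 ≤ t ∧ t < p.1 + p.2} := by
        rw [Measure.map_apply_of_aemeasurable (by fun_prop) hS]
        rfl
    _ = _ := by
        rw [hXY.map_prod_eq_prod_map_map hX.aemeasurable hY.aemeasurable, hY.map_eq,
          Measure.prod_apply hS, ← lintegral_indicator measurableSet_Iic]
        simp_rw [hsection]

theorem hasLaw_sum_range_gammaMeasure [IsProbabilityMeasure μ] {ξ : ℕ → Ω → ℝ} {r : ℝ}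
    (hr : 0 < r) (hmeas : ∀ n, Measurable (ξ n)) (hindep : iIndepFun ξ μ)
    (hlaw : ∀ n, HasLaw (ξ n) (expMeasure r) μ) (n : ℕ) :
    HasLaw (fun ω ↦ ∑ i ∈ Finset.range (n + 1), ξ i ω) (gammaMeasure (n + 1) r) μ := by
  induction n with
  | zero => simpa [expMeasure] using hlaw 0
  | succ n ih =>
    have := isProbabilityMeasure_gammaMeasure (by positivity : (0 : ℝ) < n + 1) hr
    have := isProbabilityMeasure_expMeasure hr
    have hXY : IndepFun (fun ω ↦ ∑ i ∈ Finset.range (n + 1), ξ i ω) (ξ (n + 1)) μ := by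
      simpa [← Finset.sum_apply] using hindep.indepFun_sum_range_succ hmeas (n + 1)
    rw [← gammaMeasure_conv_expMeasure n hr]
    simp only [Finset.sum_range_succ _ (n + 1)]
    exact hXY.hasLaw_add ih (hlaw (n + 1))

theorem measure_sum_range_le_lt_sum_range_succ [IsProbabilityMeasure μ] {ξ : ℕ → Ω → ℝ}
    {r t : ℝ} (hr : 0 < r) (hmeas : ∀ n, Measurable (ξ n)) (hindep : iIndepFun ξ μ)
    (hlaw : ∀ n, HasLaw (ξ n) (expMeasure r) μ) (ht : 0 ≤ t) (m : ℕ) :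
    μ {ω | ∑ i ∈ Finset.range m, ξ i ω ≤ t ∧ t < ∑ i ∈ Finset.range (m + 1), ξ i ω} =
      ENNReal.ofReal (Real.exp (-(r * t)) * (r * t) ^ m / m !) := by
  have hXY : IndepFun (fun ω ↦ ∑ i ∈ Finset.range m, ξ i ω) (ξ m) μ := by
    simpa [← Finset.sum_apply] using hindep.indepFun_sum_range_succ hmeas m
  simp only [Finset.sum_range_succ _ m]
  rw [measure_le_lt_add_eq_setLIntegral hr (by fun_prop) (hlaw m) hXY]
  cases m with
  | zero => simp [Measure.map_const, setLIntegral_dirac, ht]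
  | succ n =>
    rw [(hasLaw_sum_range_gammaMeasure hr hmeas hindep hlaw n).map_eq, gammaMeasure,
      setLIntegral_withDensity_eq_setLIntegral_mul _ (measurable_gammaPDF _ _) (by fun_prop)
        measurableSet_Iic]
    exact setLIntegral_gammaPDF_mul_exp_sub n hr.le ht

theorem ae_exists_setOf_sum_range_succ_le_eq_Iio [IsProbabilityMeasure μ] {ξ : ℕ → Ω → ℝ}
    {t : ℝ} (hmeas : ∀ n, Measurable (ξ n)) (hnonneg : ∀ᵐ ω ∂μ, ∀ i, 0 ≤ ξ i ω)
    (hsum : ∑' m, μ {ω | ∑ i ∈ Finset.range m, ξ i ω ≤ t ∧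
      t < ∑ i ∈ Finset.range (m + 1), ξ i ω} = 1) :
    ∀ᵐ ω ∂μ, ∃ k, {n | ∑ i ∈ Finset.range (n + 1), ξ i ω ≤ t} = Iio k ∧
      ∀ m, (∑ i ∈ Finset.range m, ξ i ω ≤ t ∧ t < ∑ i ∈ Finset.range (m + 1), ξ i ω) ↔ m = k := by
  set A : ℕ → Set Ω :=
    fun m ↦ {ω | ∑ i ∈ Finset.range m, ξ i ω ≤ t ∧ t < ∑ i ∈ Finset.range (m + 1), ξ i ω}
  have hT : ∀ n, Measurable fun ω ↦ ∑ i ∈ Finset.range n, ξ i ω :=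
    fun n ↦ Finset.measurable_sum _ fun i _ ↦ hmeas i
  have hAmeas : ∀ m, MeasurableSet (A m) := fun m ↦
    (measurableSet_le (hT m) measurable_const).inter
      (measurableSet_lt measurable_const (hT (m + 1)))
  have hIio : ∀ᵐ ω ∂μ, ∀ m, ω ∈ A m → {n | ∑ i ∈ Finset.range (n + 1), ξ i ω ≤ t} = Iio m := by
    filter_upwards [hnonneg] with ω hω m hm
    have hmono : Monotone fun n ↦ ∑ i ∈ Finset.range n, ξ i ω :=
      monotone_nat_of_le_succ fun n ↦ by simpa [Finset.sum_range_succ] using hω n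
    exact setOf_succ_le_eq_Iio hmono hm.1 hm.2
  have hdisj : Pairwise (AEDisjoint μ on A) := fun i j hij ↦ by
    refine measure_eq_zero_iff_ae_notMem.2 ?_
    filter_upwards [hIio] with ω hω hmem
    exact hij (Iio_injective ((hω i hmem.1).symm.trans (hω j hmem.2)))
  have hcover : ∀ᵐ ω ∂μ, ω ∈ ⋃ m, A m := by
    rw [ae_mem_iff_measure_eq (MeasurableSet.iUnion hAmeas).nullMeasurableSet,
      measure_iUnion₀ hdisj fun m ↦ (hAmeas m).nullMeasurableSet, hsum, measure_univ]
  filter_upwards [hIio, hcover] with ω hω hmem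
  obtain ⟨k, hk⟩ := mem_iUnion.1 hmem
  exact ⟨k, hω k hk, fun m ↦ ⟨fun hm ↦ Iio_injective ((hω m hm).symm.trans (hω k hk)),
    by rintro rfl; exact hk⟩⟩

end

/-- Let `λ > 0` and `(ξ_n)_{n ≥ 1}` be i.i.d. exponential random variables
with rate `λ` (here `ξ n` stands for `ξ_{n+1}`, so `T_{n+1} = ∑_{i ∈ range (n+1)} ξ i`).
For `t ≥ 0`, the number `N_t = #{n ≥ 1 : T_n ≤ t}` is a.s. finite and Poisson
distributed with parameter `λ t`. -/
theorem stmt8 (l : ℝ) (hl : 0 < l)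
    {Ω : Type*} [MeasurableSpace Ω] (μ : Measure Ω) [IsProbabilityMeasure μ]
    (ξ : ℕ → Ω → ℝ) (hmeas : ∀ n, Measurable (ξ n))
    (hindep : iIndepFun ξ μ)
    (hlaw : ∀ n, Measure.map (ξ n) μ =
      MeasureTheory.volume.withDensity
        (fun x => ENNReal.ofReal (if 0 ≤ x then l * Real.exp (-(l * x)) else 0)))
    (t : ℝ) (ht : 0 ≤ t) :
    (∀ᵐ ω ∂μ, {n : ℕ | ∑ i ∈ Finset.range (n + 1), ξ i ω ≤ t}.Finite) ∧
    ∀ m : ℕ,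
      μ {ω | {n : ℕ | ∑ i ∈ Finset.range (n + 1), ξ i ω ≤ t}.ncard = m}
        = ENNReal.ofReal (Real.exp (-(l * t)) * (l * t) ^ m / m.factorial) := by
  have hexp : ∀ n, HasLaw (ξ n) (expMeasure l) μ := fun n ↦
    ⟨(hmeas n).aemeasurable, by rw [hlaw n, ← funext (exponentialPDF_eq l)]; rfl⟩
  have hA := measure_sum_range_le_lt_sum_range_succ hl hmeas hindep hexp ht
  have hcount := ae_exists_setOf_sum_range_succ_le_eq_Iio (t := t) hmeas
    (ae_all_iff.2 fun i ↦ ae_nonneg_of_hasLaw_expMeasure (hexp i))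
    (by simp_rw [hA]; exact tsum_ofReal_poisson (by positivity))
  refine ⟨?_, fun m ↦ ?_⟩
  · filter_upwards [hcount] with ω hω
    obtain ⟨k, hk, -⟩ := hω
    exact hk ▸ finite_Iio k
  · rw [← hA m]
    refine measure_congr (Filter.eventuallyEq_set.2 ?_)
    filter_upwards [hcount] with ω hω
    obtain ⟨k, hk, hmem⟩ := hω
    simp only [hk, ncard_Iio_nat, hmem m, eq_comm]
end

section
/- Let G be a finite nonempty set, q a probability vector on G and λ ≥ 0. Let (Ω, 𝓕, ℙ) be a probability space carrying an ℕ-valued random variable N with Poisson distribution of parameter λ and an i.i.d. sequence (Y_n)_{n≥1} of G-valued random variables with distribution q, with N and the whole sequence (Y_n) mutually independent. For g ∈ G set C_g = #{1 ≤ n ≤ N : Y_n = g}. Then the family of random variables (C_g)_{g∈G} is mutually independent and each C_g has Poisson distribution with parameter q_g λ. -/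
/-!
Poissonization of the multinomial law. Conditionally on `N = n`, the count vector of
`Y_1, …, Y_n` is multinomial: it equals `c` (with `∑ c = n`) with probability
`n! ∏ q_g ^ c_g / c_g!`. Multiplying by `ℙ(N = n) = e^{-λ} λⁿ / n!` and using `∑ q_g = 1`,
`ℙ(C = c) = ∏_g e^{-q_g λ} (q_g λ)^{c_g} / c_g!`. A joint law that factors into
probability distributions is the product law, which gives both independence and the marginals.
-/

open MeasureTheory ProbabilityTheory Finset
open scoped Nat NNReal

section Independence

variable {Ω ι : Type*} [MeasurableSpace Ω] {μ : Measure Ω} [Fintype ι] {β : ι → Type*}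
  [∀ i, MeasurableSpace (β i)] [∀ i, Countable (β i)] [∀ i, MeasurableSingletonClass (β i)]
  {X : ∀ i, Ω → β i} {ν : ∀ i, Measure (β i)}

lemma map_eq_pi_of_measure_eq_prod [∀ i, SigmaFinite (ν i)] (hX : ∀ i, Measurable (X i))
    (h : ∀ c : ∀ i, β i, μ {ω | ∀ i, X i ω = c i} = ∏ i, ν i {c i}) :
    μ.map (fun ω i => X i ω) = Measure.pi ν := by
  refine Measure.ext_of_singleton fun c => ?_
  rw [Measure.map_apply (measurable_pi_lambda _ hX) (measurableSet_singleton c),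
    ← Set.univ_pi_singleton, Measure.pi_pi]
  convert h c using 2
  ext ω
  simp

lemma iIndepFun_and_map_eq_of_measure_eq_prod [IsProbabilityMeasure μ]
    [∀ i, IsProbabilityMeasure (ν i)] (hX : ∀ i, Measurable (X i))
    (h : ∀ c : ∀ i, β i, μ {ω | ∀ i, X i ω = c i} = ∏ i, ν i {c i}) :
    iIndepFun X μ ∧ ∀ i, μ.map (X i) = ν i := by
  have hjoint := map_eq_pi_of_measure_eq_prod hX h
  have hmarg : ∀ i, μ.map (X i) = ν i := fun i => by
    rw [← (measurePreserving_eval (μ := ν) i).map_eq, ← hjoint,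
      Measure.map_map (measurable_pi_apply i) (measurable_pi_lambda _ hX)]
    rfl
  refine ⟨(iIndepFun_iff_map_fun_eq_pi_map fun i => (hX i).aemeasurable).2 ?_, hmarg⟩
  rw [hjoint]
  simp_rw [hmarg]

end Independence

section PrefixCounts

variable {G : Type*} [DecidableEq G]

def prefixCounts (n : ℕ) (y : ℕ → G) (g : G) : ℕ := #{i ∈ range n | y i = g}

@[simp]
lemma prefixCounts_zero (y : ℕ → G) : prefixCounts 0 y = 0 := by
  ext; simp [prefixCounts]

lemma prefixCounts_succ (n : ℕ) (y : ℕ → G) :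
    prefixCounts (n + 1) y = prefixCounts n y + Pi.single (y n) 1 := by
  ext g
  by_cases h : y n = g
  · subst h
    simp [prefixCounts, range_add_one, filter_insert, card_insert_of_notMem]
  · simp [prefixCounts, range_add_one, filter_insert, h, Ne.symm h]

lemma sum_prefixCounts [Fintype G] (n : ℕ) (y : ℕ → G) : ∑ g, prefixCounts n y g = n := by
  have h := card_eq_sum_card_fiberwise (s := range n) (t := univ) (f := y) fun i _ => mem_univ _
  rw [card_range] at h
  exact h.symm

lemma measurable_prefixCounts [MeasurableSpace G] [MeasurableSingletonClass G] (n : ℕ) :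
    Measurable (prefixCounts n : (ℕ → G) → G → ℕ) := by
  refine measurable_pi_lambda _ fun g => ?_
  simp only [prefixCounts, card_filter]
  exact Finset.measurable_sum _ fun i _ =>
    Measurable.ite ((measurableSet_singleton g).preimage (measurable_pi_apply i))
      measurable_const measurable_const

lemma measurable_prefixCounts_comp [MeasurableSpace G] [MeasurableSingletonClass G]
    {Ω : Type*} [MeasurableSpace Ω] {Y : ℕ → Ω → G} (hY : ∀ n, Measurable (Y n)) (n : ℕ) :
    Measurable fun ω => prefixCounts n (Y · ω) :=
  (measurable_prefixCounts n).comp (measurable_pi_lambda _ hY)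

lemma measurable_prefixCounts_randomLength [MeasurableSpace G] [MeasurableSingletonClass G]
    {Ω : Type*} [MeasurableSpace Ω] {N : Ω → ℕ} {Y : ℕ → Ω → G}
    (hN : Measurable N) (hY : ∀ n, Measurable (Y n)) :
    Measurable fun ω => prefixCounts (N ω) (Y · ω) :=
  (measurable_from_prod_countable_right (f := fun p : ℕ × (ℕ → G) => prefixCounts p.1 p.2)
    measurable_prefixCounts).comp (hN.prodMk (measurable_pi_lambda _ hY))

lemma prefixCounts_eq_card_subtype (n : ℕ) (y : ℕ → G) (g : G) :
    prefixCounts n y g = #{i : range n | y i = g} := by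
  rw [prefixCounts, card_filter, card_filter,
    sum_coe_sort (range n) fun i => if y i = g then 1 else 0]

lemma exists_eq_add_single_of_ne_zero {c : G → ℕ} {g : G} (hg : c g ≠ 0) :
    ∃ d : G → ℕ, c = d + Pi.single g 1 :=
  ⟨c - Pi.single g 1, funext fun h => by
    by_cases hh : h = g
    · subst hh; simp; omega
    · simp [hh]⟩

end PrefixCounts

section Weight

variable {G : Type*} [Fintype G] [DecidableEq G]

noncomputable def multinomialWeight (q : G → ℝ) (c : G → ℕ) : ℝ := ∏ g, q g ^ c g / (c g)!

lemma mul_multinomialWeight (q : G → ℝ) (d : G → ℕ) (g : G) :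
    q g * multinomialWeight q d = (d g + 1) * multinomialWeight q (d + Pi.single g 1) := by
  simp only [multinomialWeight, ← mul_prod_erase univ _ (mem_univ g)]
  have hrest : ∏ h ∈ univ.erase g,
        q h ^ (d + Pi.single g 1 : G → ℕ) h / ((d + Pi.single g 1 : G → ℕ) h)!
      = ∏ h ∈ univ.erase g, q h ^ d h / (d h)! :=
    prod_congr rfl fun h hh => by simp [ne_of_mem_erase hh]
  rw [hrest]
  simp only [Pi.add_apply, Pi.single_eq_same, Nat.factorial_succ]
  push_cast
  field_simp
  ring

end Weight

section Multinomial

variable {Ω G : Type*} [MeasurableSpace Ω] {μ : Measure Ω} [Fintype G] [DecidableEq G]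
  [MeasurableSpace G] [MeasurableSingletonClass G] {Y : ℕ → Ω → G}

lemma indepFun_prefixCounts (hYindep : iIndepFun Y μ) (hY : ∀ n, Measurable (Y n)) (n : ℕ) :
    IndepFun (Y n) (fun ω => prefixCounts n (Y · ω)) μ := by
  have h := (hYindep.indepFun_finset {n} (range n) (by simp) hY).comp
    (measurable_pi_apply (⟨n, mem_singleton_self n⟩ : ({n} : Finset ℕ)))
    (measurable_of_finite fun v (g : G) => #{i : range n | v i = g})
  convert h using 1
  · rfl
  · funext ω g
    exact prefixCounts_eq_card_subtype n _ g

theorem measureReal_prefixCounts_eq [IsProbabilityMeasure μ] (hYindep : iIndepFun Y μ)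
    (hY : ∀ n, Measurable (Y n)) {q : G → ℝ} (hYlaw : ∀ n g, μ.real {ω | Y n ω = g} = q g)
    (n : ℕ) (c : G → ℕ) (hc : ∑ g, c g = n) :
    μ.real {ω | prefixCounts n (Y · ω) = c} = n ! * multinomialWeight q c := by
  induction n generalizing c with
  | zero =>
    obtain rfl : c = 0 := funext fun g => sum_eq_zero_iff.1 hc g (mem_univ g)
    simp [multinomialWeight]
  | succ n ih =>
    have hsplit : {ω | prefixCounts (n + 1) (Y · ω) = c}
        = ⋃ g, {ω | Y n ω = g} ∩ {ω | prefixCounts n (Y · ω) + Pi.single g 1 = c} := by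
      ext ω
      simp [prefixCounts_succ]
    have hterm : ∀ g, μ.real ({ω | Y n ω = g} ∩ {ω | prefixCounts n (Y · ω) + Pi.single g 1 = c})
        = c g * (n ! * multinomialWeight q c) := by
      intro g
      by_cases hg : c g = 0
      · have hempty : {ω | prefixCounts n (Y · ω) + Pi.single g 1 = c} = ∅ :=
          Set.eq_empty_of_forall_notMem fun ω h => by simpa [hg] using congrFun h g
        simp [hempty, hg]
      · obtain ⟨d, rfl⟩ := exists_eq_add_single_of_ne_zero hg
        have hd : ∑ h, d h = n := by simpa [sum_add_distrib] using hc
        have hindep := (indepFun_prefixCounts hYindep hY n).measure_inter_preimage_eq_mul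
          {g} {d} (measurableSet_singleton g) (measurableSet_singleton d)
        simp only [add_left_inj]
        calc μ.real ({ω | Y n ω = g} ∩ {ω | prefixCounts n (Y · ω) = d})
            = μ.real {ω | Y n ω = g} * μ.real {ω | prefixCounts n (Y · ω) = d} := by
              simp only [measureReal_def, ← ENNReal.toReal_mul]
              exact congrArg ENNReal.toReal hindep
          _ = n ! * (q g * multinomialWeight q d) := by rw [hYlaw, ih d hd]; ring
          _ = _ := by
              rw [mul_multinomialWeight]
              simp only [Pi.add_apply, Pi.single_eq_same]
              push_cast
              ring
    rw [hsplit, measureReal_iUnion_fintype, sum_congr rfl fun g _ => hterm g, ← sum_mul,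
      ← Nat.cast_sum, hc, Nat.factorial_succ]
    · push_cast; ring
    · intro g g' hgg'
      exact Set.disjoint_left.2 fun ω h1 h2 => hgg' (h1.1.symm.trans h2.1)
    · exact fun g => ((hY n) (measurableSet_singleton g)).inter
        ((measurable_prefixCounts_comp hY n).add measurable_const (measurableSet_singleton c))

end Multinomial

lemma poisson_mul_multinomialWeight {G : Type*} [Fintype G] (q : G → ℝ) (hq1 : ∑ g, q g = 1)
    (l : ℝ) (c : G → ℕ) :
    Real.exp (-l) * l ^ (∑ g, c g) / (∑ g, c g)! * ((∑ g, c g)! * multinomialWeight q c)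
      = ∏ g, Real.exp (-(q g * l)) * (q g * l) ^ c g / (c g)! := by
  have hexp : ∏ g, Real.exp (-(q g * l)) = Real.exp (-l) := by
    rw [← Real.exp_sum, sum_neg_distrib, ← sum_mul, hq1, one_mul]
  simp only [multinomialWeight, div_eq_mul_inv, mul_pow, prod_mul_distrib, hexp,
    ← prod_pow_eq_pow_sum]
  field_simp


theorem measureReal_prefixCounts_poisson {Ω G : Type*} [MeasurableSpace Ω] {μ : Measure Ω}
    [IsProbabilityMeasure μ] [Fintype G] [DecidableEq G] [MeasurableSpace G]
    [MeasurableSingletonClass G] {Y : ℕ → Ω → G} (hYindep : iIndepFun Y μ)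
    (hY : ∀ n, Measurable (Y n)) {q : G → ℝ} (hq1 : ∑ g, q g = 1)
    (hYlaw : ∀ n g, μ.real {ω | Y n ω = g} = q g) {N : Ω → ℕ}
    (hNY : IndepFun N (fun ω n => Y n ω) μ) {l : ℝ}
    (hNlaw : ∀ n, μ.real {ω | N ω = n} = Real.exp (-l) * l ^ n / n !) (c : G → ℕ) :
    μ.real {ω | ∀ g, prefixCounts (N ω) (Y · ω) g = c g}
      = ∏ g, Real.exp (-(q g * l)) * (q g * l) ^ c g / (c g)! := by
  set n := ∑ g, c g
  have hset : {ω | ∀ g, prefixCounts (N ω) (Y · ω) g = c g}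
      = {ω | N ω = n} ∩ {ω | prefixCounts n (Y · ω) = c} := by
    ext ω
    simp only [Set.mem_ofPred_eq, Set.mem_inter_iff, ← funext_iff]
    constructor
    · intro h
      have hN : N ω = n := by rw [← sum_prefixCounts (N ω) (Y · ω), h]
      exact ⟨hN, hN ▸ h⟩
    · rintro ⟨hN, h⟩
      rwa [hN]
  have hindep : μ ({ω | N ω = n} ∩ {ω | prefixCounts n (Y · ω) = c})
      = μ {ω | N ω = n} * μ {ω | prefixCounts n (Y · ω) = c} :=
    hNY.measure_inter_preimage_eq_mul _ _ (measurableSet_singleton n)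
      (measurable_prefixCounts n (measurableSet_singleton c))
  rw [hset, measureReal_def, hindep, ENNReal.toReal_mul, ← measureReal_def, ← measureReal_def,
    hNlaw, measureReal_prefixCounts_eq hYindep hY hYlaw n c rfl]
  exact poisson_mul_multinomialWeight q hq1 l c

theorem stmt9_general {G : Type*} [Fintype G] [DecidableEq G]
    [mG : MeasurableSpace G] [MeasurableSingletonClass G]
    (q : G → ℝ) (hq0 : ∀ g, 0 ≤ q g) (hq1 : ∑ g, q g = 1)
    (l : ℝ) (hl : 0 ≤ l)
    {Ω : Type*} [MeasurableSpace Ω] (μ : Measure Ω) [IsProbabilityMeasure μ]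
    (N : Ω → ℕ) (hNmeas : Measurable N)
    (hNlaw : ∀ m : ℕ, μ {ω | N ω = m}
      = ENNReal.ofReal (Real.exp (-l) * l ^ m / m.factorial))
    (Y : ℕ → Ω → G) (hYmeas : ∀ n, Measurable (Y n))
    (hYindep : iIndepFun (m := fun _ => mG) Y μ)
    (hYlaw : ∀ n g, μ {ω | Y n ω = g} = ENNReal.ofReal (q g))
    (hNY : IndepFun N (fun ω (n : ℕ) => Y n ω) μ) :
    iIndepFun (m := fun _ => (inferInstance : MeasurableSpace ℕ))
      (fun (g : G) (ω : Ω) =>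
        ((Finset.range (N ω)).filter (fun n => Y n ω = g)).card) μ ∧
    ∀ (g : G) (m : ℕ),
      μ {ω | ((Finset.range (N ω)).filter (fun n => Y n ω = g)).card = m}
        = ENNReal.ofReal (Real.exp (-(q g * l)) * (q g * l) ^ m / m.factorial) := by
  let r : G → ℝ≥0 := fun g => ⟨q g * l, mul_nonneg (hq0 g) hl⟩
  have hC (g : G) : Measurable fun ω => prefixCounts (N ω) (Y · ω) g :=
    (measurable_pi_apply g).comp (measurable_prefixCounts_randomLength hNmeas hYmeas)
  have hjoint (c : G → ℕ) : μ {ω | ∀ g, prefixCounts (N ω) (Y · ω) g = c g}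
      = ∏ g, poissonMeasure (r g) {c g} := by
    rw [← ofReal_measureReal, measureReal_prefixCounts_poisson hYindep hYmeas hq1
      (fun n g => by rw [measureReal_def, hYlaw, ENNReal.toReal_ofReal (hq0 g)])
      hNY (fun n => by rw [measureReal_def, hNlaw, ENNReal.toReal_ofReal (by positivity)]) c,
      ENNReal.ofReal_prod_of_nonneg fun g _ => by have := hq0 g; positivity]
    exact prod_congr rfl fun g _ => (poissonMeasure_singleton (r g) (c g)).symm
  obtain ⟨hindep, hmarg⟩ := iIndepFun_and_map_eq_of_measure_eq_prod hC hjoint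
  refine ⟨hindep, fun g m => ?_⟩
  calc μ {ω | prefixCounts (N ω) (Y · ω) g = m}
      = μ.map (fun ω => prefixCounts (N ω) (Y · ω) g) {m} :=
        (Measure.map_apply (hC g) (measurableSet_singleton m)).symm
    _ = poissonMeasure (r g) {m} := by rw [hmarg g]
    _ = _ := poissonMeasure_singleton (r g) m

/-- Let `q` be a probability vector on a finite nonempty set `G`, `λ ≥ 0`,
`N` a Poisson random variable of parameter `λ`, and `(Y_n)_{n ≥ 1}` an i.i.d. sequence with
distribution `q`, independent of `N` (here `Y n` stands for `Y_{n+1}`).  Then the counts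
`C_g = #{1 ≤ n ≤ N : Y_n = g}` are mutually independent, and `C_g` is Poisson with
parameter `q_g λ`. -/
theorem stmt9 {G : Type*} [Fintype G] [Nonempty G] [DecidableEq G]
    [mG : MeasurableSpace G] [MeasurableSingletonClass G]
    (q : G → ℝ) (hq0 : ∀ g, 0 ≤ q g) (hq1 : ∑ g, q g = 1)
    (l : ℝ) (hl : 0 ≤ l)
    {Ω : Type*} [MeasurableSpace Ω] (μ : Measure Ω) [IsProbabilityMeasure μ]
    (N : Ω → ℕ) (hNmeas : Measurable N)
    (hNlaw : ∀ m : ℕ, μ {ω | N ω = m}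
      = ENNReal.ofReal (Real.exp (-l) * l ^ m / m.factorial))
    (Y : ℕ → Ω → G) (hYmeas : ∀ n, Measurable (Y n))
    (hYindep : iIndepFun (m := fun _ => mG) Y μ)
    (hYlaw : ∀ n g, μ {ω | Y n ω = g} = ENNReal.ofReal (q g))
    (hNY : IndepFun N (fun ω (n : ℕ) => Y n ω) μ) :
    iIndepFun (m := fun _ => (inferInstance : MeasurableSpace ℕ))
      (fun (g : G) (ω : Ω) =>
        ((Finset.range (N ω)).filter (fun n => Y n ω = g)).card) μ ∧
    ∀ (g : G) (m : ℕ),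
      μ {ω | ((Finset.range (N ω)).filter (fun n => Y n ω = g)).card = m}
        = ENNReal.ofReal (Real.exp (-(q g * l)) * (q g * l) ^ m / m.factorial) :=
  stmt9_general (mG := mG) q hq0 hq1 l hl μ N hNmeas hNlaw Y hYmeas hYindep hYlaw hNY
end

section
/- Let E and G be finite nonempty sets, φ : E × G → E × G a bijection, λ > 0 and t ≥ 0. For m ≥ 1 define the bijection φ_m of E × G^m by applying φ successively to the state and the 1st, 2nd, …, m-th mark (φ_m = φ^{(m)} ∘ ⋯ ∘ φ^{(1)}, where φ^{(n)} acts as φ on the E-component and the n-th G-component and as the identity on the remaining components), and φ_0 = id. Consider the measurable space Ω = E × G^ℕ × [0,∞)^ℕ with probability measure ℙ = μ_E ⊗ μ_G^{⊗ℕ} ⊗ ν_λ^{⊗ℕ}, where μ_E and μ_G are the uniform probability measures on E and G and ν_λ is the exponential law with rate λ. Define ψ_t : Ω → Ω by ψ_t(i, (g_n)_{n≥1}, (e_n)_{n≥1}) = (i', (g'_n)_{n≥1}, (e_n)_{n≥1}), where m = #{n ≥ 1 : e_1 + ⋯ + e_n ≤ t} (finite ℙ-a.e.; set ψ_t = id where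 m is infinite), (i', g'_1, …, g'_m) = φ_m(i, g_1, …, g_m) and g'_n = g_n for n > m. Then ψ_t is measurable and measure-preserving: ℙ(ψ_t^{−1}(A)) = ℙ(A) for every measurable A ⊆ Ω, and the same holds for the analogously defined map built from φ^{−1}. -/
open MeasureTheory ProbabilityTheory

/-- Successive application of the interaction `φ` to the system state and the 1st, …, m-th
mark: `chainMap φ m = φ⁽ᵐ⁾ ∘ ⋯ ∘ φ⁽¹⁾`, where `φ⁽ⁿ⁾` acts as `φ` on the `E`-component and
the `n`-th `G`-component (index `n − 1` in the `0`-based sequence) and as the identity on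
the remaining components. -/
def chainMap {E G : Type*} (φ : E × G → E × G) : ℕ → E × (ℕ → G) → E × (ℕ → G)
  | 0 => id
  | m + 1 => fun p =>
      let p' := chainMap φ m p
      let r := φ (p'.1, p'.2 m)
      (r.1, Function.update p'.2 m r.2)

open Classical in
/-- The global evolution `ψ_t` on `Ω = E × G^ℕ × [0,∞)^ℕ` (represented as
`E × (ℕ → G) × (ℕ → ℝ)`, the sequences being `0`-based): with
`m = #{n ≥ 1 : e_1 + ⋯ + e_n ≤ t}` (if finite; `ψ_t = id` where it is infinite), the
state and the first `m` marks are transformed by `φ_m` and everything else is left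
unchanged. -/
noncomputable def psiMap {E G : Type*} (φ : E × G → E × G) (t : ℝ) :
    E × (ℕ → G) × (ℕ → ℝ) → E × (ℕ → G) × (ℕ → ℝ) := fun ω =>
  if ({n : ℕ | ∑ i ∈ Finset.range (n + 1), ω.2.2 i ≤ t} : Set ℕ).Finite then
    let m := ({n : ℕ | ∑ i ∈ Finset.range (n + 1), ω.2.2 i ≤ t} : Set ℕ).ncard
    ((chainMap φ m (ω.1, ω.2.1)).1, (chainMap φ m (ω.1, ω.2.1)).2, ω.2.2)
  else ω

/-- The type of a coordinate of `Ω = E × G^ℕ × ℝ^ℕ`, indexed by `Unit ⊕ ℕ ⊕ ℕ`. -/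
def coordType (E G : Type) : Unit ⊕ ℕ ⊕ ℕ → Type
  | .inl _ => E
  | .inr (.inl _) => G
  | .inr (.inr _) => ℝ

/-- The coordinate maps of `Ω = E × G^ℕ × ℝ^ℕ`. -/
def coordFun (E G : Type) :
    ∀ i : Unit ⊕ ℕ ⊕ ℕ, E × (ℕ → G) × (ℕ → ℝ) → coordType E G i
  | .inl _ => fun ω => ω.1
  | .inr (.inl n) => fun ω => ω.2.1 n
  | .inr (.inr n) => fun ω => ω.2.2 n

/-- The measurable structure on each coordinate of `Ω = E × G^ℕ × ℝ^ℕ`. -/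
def coordMS (E G : Type) [MeasurableSpace E] [MeasurableSpace G] :
    ∀ i : Unit ⊕ ℕ ⊕ ℕ, MeasurableSpace (coordType E G i)
  | .inl _ => (inferInstance : MeasurableSpace E)
  | .inr (.inl _) => (inferInstance : MeasurableSpace G)
  | .inr (.inr _) => (inferInstance : MeasurableSpace ℝ)

/-!
The number `m` of arrivals up to time `t` is a function of the clocks alone, and on the event
`{m = k}` the map `ψ_t` is the block map `φ_k` acting on the state and the first `k` marks,
which leaves the clocks untouched. Hence it suffices that each block map preserves `ℙ`.
Under `ℙ` the state together with the first `k` marks is uniform on the finite set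
`E × G^k` and independent of all other coordinates. The block map fixes those other
coordinates and, on each fibre, acts on `E × G^k` by an injection (a composition of the
injective moves `φ⁽ⁿ⁾`), and an injection of a finite set preserves the uniform law.
-/

open Function

section chainMap

variable {E G : Type*} (φ : E × G → E × G)

theorem chainMap_succ (m : ℕ) (p : E × (ℕ → G)) :
    chainMap φ (m + 1) p =
      ((φ ((chainMap φ m p).1, (chainMap φ m p).2 m)).1,
        update (chainMap φ m p).2 m (φ ((chainMap φ m p).1, (chainMap φ m p).2 m)).2) :=
  rfl

theorem chainMap_snd_of_le {m n : ℕ} (h : m ≤ n) (p : E × (ℕ → G)) :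
    (chainMap φ m p).2 n = p.2 n := by
  induction m with
  | zero => rfl
  | succ m ih =>
    rw [chainMap_succ]
    exact (update_of_ne (by omega) _ _).trans (ih (by omega))

theorem chainMap_injective (hφ : Injective φ) (m : ℕ) : Injective (chainMap φ m) := by
  induction m with
  | zero => exact injective_id
  | succ m ih =>
    intro p q h
    rw [chainMap_succ, chainMap_succ, Prod.ext_iff, funext_iff] at h
    obtain ⟨h₁, h₂⟩ := h
    have hφpq := hφ (Prod.ext h₁ (by simpa using h₂ m))
    simp only [Prod.ext_iff] at hφpq
    refine ih (Prod.ext hφpq.1 (funext fun n => ?_))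
    rcases eq_or_ne n m with rfl | hn
    · exact hφpq.2
    · simpa [update_of_ne hn] using h₂ n

theorem measurable_chainMap [MeasurableSpace E] [MeasurableSpace G] (hφ : Measurable φ)
    (m : ℕ) : Measurable (chainMap φ m) := by
  induction m with
  | zero => exact measurable_id
  | succ m ih =>
    have hstep : Measurable fun p => φ ((chainMap φ m p).1, (chainMap φ m p).2 m) :=
      hφ.comp (ih.fst.prodMk ((measurable_pi_apply m).comp ih.snd))
    exact hstep.fst.prodMk (measurable_update'.comp (ih.snd.prodMk hstep.snd))

end chainMap

namespace MeasureTheory.MeasurePreserving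

theorem of_injective_of_measure_singleton_eq {α : Type*} [MeasurableSpace α]
    [MeasurableSingletonClass α] [Finite α] {ν : Measure α} (hν : ∀ a b, ν {a} = ν {b})
    {g : α → α} (hg : Injective g) : MeasurePreserving g ν ν := by
  refine ⟨measurable_of_finite g, Measure.ext_iff_singleton.2 fun a => ?_⟩
  obtain ⟨b, rfl⟩ := hg.bijective_of_finite.2 a
  have hpre : g ⁻¹' {g b} = {b} := by rw [← Set.image_singleton, hg.preimage_image]
  rw [Measure.map_apply (measurable_of_finite g) (measurableSet_singleton _), hpre, hν]

theorem of_indepFun_of_fiberwise {Ω α β : Type*} [MeasurableSpace Ω] [MeasurableSpace α]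
    [MeasurableSpace β] {μ : Measure Ω} [IsFiniteMeasure μ] (e : Ω ≃ᵐ β × α)
    (he : IndepFun (fun ω => (e ω).1) (fun ω => (e ω).2) μ) {T : Ω → Ω} (hT : Measurable T)
    (hfst : ∀ ω, (e (T ω)).1 = (e ω).1)
    (hsnd : ∀ y, MeasurePreserving (fun x => (e (T (e.symm (y, x)))).2)
      (μ.map fun ω => (e ω).2) (μ.map fun ω => (e ω).2)) :
    MeasurePreserving T μ μ := by
  have he_mp : MeasurePreserving e μ ((μ.map fun ω => (e ω).1).prod (μ.map fun ω => (e ω).2)) :=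
    ⟨e.measurable, (he.map_prod_eq_prod_map_map e.measurable.fst.aemeasurable
      e.measurable.snd.aemeasurable)⟩
  -- Read through `e`, `T` is a skew product over the identity of `β`.
  have hconj : MeasurePreserving (fun p => (p.1, (e (T (e.symm p))).2))
      ((μ.map fun ω => (e ω).1).prod (μ.map fun ω => (e ω).2))
      ((μ.map fun ω => (e ω).1).prod (μ.map fun ω => (e ω).2)) :=
    MeasurePreserving.id _ |>.skew_product (g := fun y x => (e (T (e.symm (y, x)))).2)
      (e.measurable.snd.comp (hT.comp e.symm.measurable))
      (ae_of_all _ fun y => (hsnd y).map_eq)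
  convert (he_mp.symm e).comp (hconj.comp he_mp) using 1
  funext ω
  simp only [comp_apply, MeasurableEquiv.symm_apply_apply]
  rw [← hfst, Prod.mk.eta, MeasurableEquiv.symm_apply_apply]

theorem piecewise_of_countable {Ω ι : Type*} [MeasurableSpace Ω] [MeasurableSpace ι]
    [Countable ι] [MeasurableSingletonClass ι] {μ : Measure Ω} {k : Ω → ι} (hk : Measurable k)
    {T : ι → Ω → Ω} (hT : ∀ i, MeasurePreserving (T i) μ μ) (hkT : ∀ i ω, k (T i ω) = k ω) :
    MeasurePreserving (fun ω => T (k ω) ω) μ μ := by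
  have hmeas : Measurable fun ω => T (k ω) ω :=
    (measurable_from_prod_countable_left (f := fun p : Ω × ι => T p.2 p.1)
      fun i => (hT i).measurable).comp (measurable_id.prodMk hk)
  have hsum : ∀ A, MeasurableSet A → μ A = ∑' i, μ (A ∩ k ⁻¹' {i}) := fun A hA => by
    rw [← measure_iUnion (fun i j hij => ((Set.disjoint_singleton.2 hij).preimage k).mono
      Set.inter_subset_right Set.inter_subset_right)
      fun i => hA.inter (hk (measurableSet_singleton i))]
    congr 1
    ext ω
    simp
  refine ⟨hmeas, Measure.ext fun B hB => ?_⟩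
  rw [Measure.map_apply hmeas hB, hsum _ (hmeas hB), hsum B hB]
  congr 1 with i
  have hpre : (fun ω => T (k ω) ω) ⁻¹' B ∩ k ⁻¹' {i} = T i ⁻¹' (B ∩ k ⁻¹' {i}) := by
    ext ω
    simp only [Set.mem_inter_iff, Set.mem_preimage, Set.mem_singleton_iff, hkT]
    constructor <;> rintro ⟨h, rfl⟩ <;> exact ⟨h, rfl⟩
  rw [hpre, (hT i).measure_preimage (hB.inter (hk (measurableSet_singleton i))).nullMeasurableSet]

end MeasureTheory.MeasurePreserving

section blocks

variable {E G R : Type*}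

def headMarks (m : ℕ) (ω : E × (ℕ → G) × R) : E × (Fin m → G) := (ω.1, fun k => ω.2.1 k)

def tailMarks (m : ℕ) (ω : E × (ℕ → G) × R) : (ℕ → G) × R := (fun n => ω.2.1 (n + m), ω.2.2)

def blockMap (φ : E × G → E × G) (m : ℕ) (ω : E × (ℕ → G) × R) : E × (ℕ → G) × R :=
  ((chainMap φ m (ω.1, ω.2.1)).1, (chainMap φ m (ω.1, ω.2.1)).2, ω.2.2)

theorem tailMarks_blockMap (φ : E × G → E × G) (m : ℕ) (ω : E × (ℕ → G) × R) :
    tailMarks m (blockMap φ m ω) = tailMarks m ω :=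
  Prod.ext (funext fun n => chainMap_snd_of_le φ (by omega) _) rfl

theorem blockMap_injective {φ : E × G → E × G} (hφ : Injective φ) (m : ℕ) :
    Injective (blockMap φ m : E × (ℕ → G) × R → E × (ℕ → G) × R) := by
  intro ω ω' h
  simp only [blockMap, Prod.ext_iff] at h
  have hp := chainMap_injective φ hφ m (Prod.ext h.1 h.2.1)
  simp only [Prod.ext_iff] at hp
  exact Prod.ext hp.1 (Prod.ext hp.2 h.2.2)

variable [MeasurableSpace E] [MeasurableSpace G] [MeasurableSpace R]

theorem measurable_headMarks (m : ℕ) :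
    Measurable (headMarks m : E × (ℕ → G) × R → E × (Fin m → G)) :=
  measurable_fst.prodMk
    (measurable_pi_lambda _ fun _ => (measurable_pi_apply _).comp measurable_snd.fst)

theorem measurable_tailMarks (m : ℕ) :
    Measurable (tailMarks m : E × (ℕ → G) × R → (ℕ → G) × R) :=
  (measurable_pi_lambda _ fun _ => (measurable_pi_apply _).comp measurable_snd.fst).prodMk
    measurable_snd.snd

theorem measurable_blockMap {φ : E × G → E × G} (hφ : Measurable φ) (m : ℕ) :
    Measurable (blockMap φ m : E × (ℕ → G) × R → E × (ℕ → G) × R) := by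
  have h := (measurable_chainMap φ hφ m).comp
    (measurable_fst.prodMk measurable_snd.fst : Measurable fun ω : E × (ℕ → G) × R => (ω.1, ω.2.1))
  exact h.fst.prodMk (h.snd.prodMk measurable_snd.snd)

def tailHeadEquiv (m : ℕ) : E × (ℕ → G) × R ≃ᵐ ((ℕ → G) × R) × (E × (Fin m → G)) where
  toFun ω := (tailMarks m ω, headMarks m ω)
  invFun p := (p.2.1, fun n => if h : n < m then p.2.2 ⟨n, h⟩ else p.1.1 (n - m), p.1.2)
  left_inv ω := by
    refine Prod.ext rfl (Prod.ext (funext fun n => ?_) rfl)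
    by_cases h : n < m
    · simp [h, headMarks]
    · simp [h, tailMarks, Nat.sub_add_cancel (not_lt.1 h)]
  right_inv p := by
    refine Prod.ext (Prod.ext (funext fun n => ?_) rfl) (Prod.ext rfl (funext fun k => ?_))
    · simp [tailMarks]
    · simp [headMarks]
  measurable_toFun := (measurable_tailMarks m).prodMk (measurable_headMarks m)
  measurable_invFun := by
    refine measurable_snd.fst.prodMk (Measurable.prodMk ?_ measurable_fst.snd)
    refine measurable_pi_lambda _ fun n => ?_
    by_cases h : n < m
    · simp only [h, dif_pos]
      exact (measurable_pi_apply _).comp measurable_snd.snd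
    · simp only [h, dif_neg, not_false_eq_true]
      exact (measurable_pi_apply _).comp measurable_fst.fst

end blocks

section coordinates

variable {E G : Type} [MeasurableSpace E] [MeasurableSpace G]

theorem measurable_coordFun : ∀ i, Measurable[_, coordMS E G i] (coordFun E G i)
  | .inl _ => measurable_fst
  | .inr (.inl n) => (measurable_pi_apply n).comp measurable_snd.fst
  | .inr (.inr n) => (measurable_pi_apply n).comp measurable_snd.snd

theorem indepFun_tailMarks_headMarks {μ : Measure (E × (ℕ → G) × (ℕ → ℝ))}
    (hindep : iIndepFun (m := coordMS E G) (coordFun E G) μ) (m : ℕ) :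
    IndepFun (tailMarks m) (headMarks m) μ := by
  let M i := (coordMS E G i).comap (coordFun E G i)
  let S : Set (Unit ⊕ ℕ ⊕ ℕ) := {i | i = .inl () ∨ ∃ n < m, i = .inr (.inl n)}
  have hST : Indep (⨆ i ∈ Sᶜ, M i) (⨆ i ∈ S, M i) μ :=
    indep_iSup_of_disjoint (fun i => (measurable_coordFun i).comap_le)
      ((iIndepFun_iff_iIndep _ _ _).1 hindep) disjoint_compl_left
  have hcoord : ∀ {s : Set (Unit ⊕ ℕ ⊕ ℕ)} {i}, i ∈ s →
      Measurable[⨆ i ∈ s, M i, coordMS E G i] (coordFun E G i) :=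
    fun {s i} hi => Measurable.of_comap_le (le_iSup₂ (f := fun i (_ : i ∈ s) => M i) i hi)
  rw [IndepFun_iff_Indep]
  refine indep_of_indep_of_le_right (indep_of_indep_of_le_left hST ?_) ?_
  · refine Measurable.comap_le (Measurable.prodMk (m := ⨆ i ∈ Sᶜ, M i) ?_ ?_) <;>
      refine (@measurable_pi_iff _ _ _ (⨆ i ∈ Sᶜ, M i) _ _).2 fun n => ?_
    · exact hcoord (i := .inr (.inl (n + m))) (by simp [S])
    · exact hcoord (i := .inr (.inr n)) (by simp [S])
  · refine Measurable.comap_le (Measurable.prodMk (m := ⨆ i ∈ S, M i)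
      (hcoord (i := .inl ()) (by simp [S])) ?_)
    exact (@measurable_pi_iff _ _ _ (⨆ i ∈ S, M i) _ _).2 fun k =>
      hcoord (i := .inr (.inl k)) (by simp [S])

end coordinates

section uniform

variable {E G : Type}

def headIndices (m : ℕ) : Finset (Unit ⊕ ℕ ⊕ ℕ) :=
  insert (.inl ()) ((Finset.range m).image fun n => .inr (.inl n))

def headCell (m : ℕ) (x : E × (Fin m → G)) : ∀ i, Set (coordType E G i)
  | .inl _ => {x.1}
  | .inr (.inl n) => if h : n < m then {x.2 ⟨n, h⟩} else Set.univ
  | .inr (.inr _) => Set.univ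

theorem headMarks_preimage_singleton (m : ℕ) (x : E × (Fin m → G)) :
    (headMarks m ⁻¹' {x} : Set (E × (ℕ → G) × (ℕ → ℝ)))
      = ⋂ i ∈ headIndices m, coordFun E G i ⁻¹' headCell m x i := by
  ext ω
  simp +contextual only [Set.mem_preimage, headMarks, Set.mem_singleton_iff, Prod.ext_iff,
    funext_iff, Fin.forall_iff, headIndices, Finset.mem_insert, Finset.mem_image,
    Finset.mem_range, coordFun, headCell, Set.iInter_iInter_eq_or_left, Set.iInter_exists,
    Set.biInter_and', Set.iInter_iInter_eq_right, ↓reduceDIte, Set.mem_inter_iff,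
    Set.mem_iInter]
  exact Iff.rfl

variable [MeasurableSpace E] [MeasurableSpace G]

theorem measurableSet_headCell [MeasurableSingletonClass E] [MeasurableSingletonClass G]
    (m : ℕ) (x : E × (Fin m → G)) : ∀ i, MeasurableSet[coordMS E G i] (headCell m x i)
  | .inl _ => measurableSet_singleton x.1
  | .inr (.inl n) => by
    by_cases h : n < m
    · simp only [headCell, h, ↓reduceDIte]
      exact measurableSet_singleton (α := G) _
    · simp only [headCell, h, ↓reduceDIte]
      exact MeasurableSet.univ
  | .inr (.inr _) => MeasurableSet.univ

theorem map_headMarks_singleton_eq [Fintype E] [Fintype G] [MeasurableSingletonClass E]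
    [MeasurableSingletonClass G] {μ : Measure (E × (ℕ → G) × (ℕ → ℝ))}
    (hindep : iIndepFun (m := coordMS E G) (coordFun E G) μ)
    (hmargE : μ.map (fun ω => ω.1) = (Fintype.card E : ENNReal)⁻¹ • Measure.count)
    (hmargG : ∀ n : ℕ, μ.map (fun ω => ω.2.1 n) = (Fintype.card G : ENNReal)⁻¹ • Measure.count)
    (m : ℕ) (x y : E × (Fin m → G)) :
    μ.map (headMarks m) {x} = μ.map (headMarks m) {y} := by
  have hmarg : ∀ {α : Type} [MeasurableSpace α] [MeasurableSingletonClass α] {f : _ → α}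
      {c : ENNReal}, Measurable f → μ.map f = c • Measure.count → ∀ a, μ (f ⁻¹' {a}) = c :=
    fun hf hc a => by
      rw [← Measure.map_apply hf (measurableSet_singleton a), hc]
      simp
  simp only [Measure.map_apply (measurable_headMarks m) (measurableSet_singleton _),
    headMarks_preimage_singleton, hindep.measure_inter_preimage_eq_mul _
      fun i _ => measurableSet_headCell m _ i]
  refine Finset.prod_congr rfl fun i _ => ?_
  rcases i with _ | n | n
  · exact (hmarg measurable_fst hmargE _).trans (hmarg measurable_fst hmargE _).symm
  · by_cases h : n < m
    · have hG := hmarg ((measurable_pi_apply n).comp measurable_snd.fst) (hmargG n)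
      simp only [headCell, h, dif_pos]
      exact (hG _).trans (hG _).symm
    · simp [headCell, h]
  · rfl

end uniform

/-- Its cardinality is the paper's `m = #{n ≥ 1 : e_1 + ⋯ + e_n ≤ t}`, with `0`-based indices. -/
def arrivalsUpTo (t : ℝ) (e : ℕ → ℝ) : Set ℕ := {n | ∑ i ∈ Finset.range (n + 1), e i ≤ t}

theorem measurable_arrivalsUpTo (t : ℝ) : Measurable (arrivalsUpTo t) :=
  measurable_set_iff.2 fun _ => measurableSet_setOfPred.1 <|
    measurableSet_le (Finset.measurable_sum _ fun i _ => measurable_pi_apply i) measurable_const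

theorem psiMap_eq_blockMap {E G : Type*} (φ : E × G → E × G) (t : ℝ) :
    psiMap φ t = fun ω => ENat.recTopCoe id (blockMap φ) (arrivalsUpTo t ω.2.2).encard ω := by
  funext ω
  by_cases hfin : (arrivalsUpTo t ω.2.2).Finite
  · rw [← hfin.cast_ncard_eq, ENat.recTopCoe_natCast]
    exact if_pos hfin
  · rw [Set.encard_eq_top_iff.2 hfin, ENat.recTopCoe_top]
    exact if_neg hfin

theorem measurePreserving_blockMap {E G : Type} [Fintype E] [Fintype G] [MeasurableSpace E]
    [MeasurableSingletonClass E] [MeasurableSpace G] [MeasurableSingletonClass G]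
    {φ : E × G → E × G} (hφ : Injective φ) (m : ℕ) {μ : Measure (E × (ℕ → G) × (ℕ → ℝ))}
    [IsFiniteMeasure μ] (hindep : iIndepFun (m := coordMS E G) (coordFun E G) μ)
    (hmargE : μ.map (fun ω => ω.1) = (Fintype.card E : ENNReal)⁻¹ • Measure.count)
    (hmargG : ∀ n : ℕ, μ.map (fun ω => ω.2.1 n) = (Fintype.card G : ENNReal)⁻¹ • Measure.count) :
    MeasurePreserving (blockMap φ m) μ μ := by
  let e := tailHeadEquiv (E := E) (G := G) (R := ℕ → ℝ) m
  have hfst : ∀ ω, (e (blockMap φ m ω)).1 = (e ω).1 := tailMarks_blockMap φ m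
  refine .of_indepFun_of_fiberwise e (indepFun_tailMarks_headMarks hindep m)
    (measurable_blockMap (measurable_of_finite φ) m) hfst fun y => ?_
  refine .of_injective_of_measure_singleton_eq (map_headMarks_singleton_eq hindep hmargE hmargG m)
    fun x x' h => ?_
  have hy : ∀ x, (e (blockMap φ m (e.symm (y, x)))).1 = y := fun x => by
    rw [hfst, MeasurableEquiv.apply_symm_apply]
  have hyx := e.symm.injective (blockMap_injective hφ m (e.injective (Prod.ext ((hy x).trans
    (hy x').symm) h)))
  exact congrArg Prod.snd hyx

theorem measurePreserving_psiMap {E G : Type} [Fintype E] [Fintype G] [MeasurableSpace E]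
    [MeasurableSingletonClass E] [MeasurableSpace G] [MeasurableSingletonClass G]
    {φ : E × G → E × G} (hφ : Injective φ) (t : ℝ) {μ : Measure (E × (ℕ → G) × (ℕ → ℝ))}
    [IsFiniteMeasure μ] (hindep : iIndepFun (m := coordMS E G) (coordFun E G) μ)
    (hmargE : μ.map (fun ω => ω.1) = (Fintype.card E : ENNReal)⁻¹ • Measure.count)
    (hmargG : ∀ n : ℕ, μ.map (fun ω => ω.2.1 n) = (Fintype.card G : ENNReal)⁻¹ • Measure.count) :
    MeasurePreserving (psiMap φ t) μ μ := by
  rw [psiMap_eq_blockMap]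
  refine .piecewise_of_countable
    (measurable_encard.comp ((measurable_arrivalsUpTo t).comp measurable_snd.snd))
    (fun n => ?_) fun n ω => ?_
  · induction n using ENat.recTopCoe with
    | top => exact .id μ
    | coe m => exact measurePreserving_blockMap hφ m hindep hmargE hmargG
  · induction n using ENat.recTopCoe <;> rfl

theorem stmt12_general {E G : Type} [Fintype E] [Fintype G]
    [mE : MeasurableSpace E] [MeasurableSingletonClass E]
    [mG : MeasurableSpace G] [MeasurableSingletonClass G]
    (φ : (E × G) ≃ (E × G)) (t : ℝ)
    (μ : Measure (E × (ℕ → G) × (ℕ → ℝ))) [IsProbabilityMeasure μ]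
    (hindep : iIndepFun (m := coordMS E G) (coordFun E G) μ)
    (hmargE : Measure.map (fun ω : E × (ℕ → G) × (ℕ → ℝ) => ω.1) μ
      = (Fintype.card E : ENNReal)⁻¹ • Measure.count)
    (hmargG : ∀ n : ℕ, Measure.map (fun ω : E × (ℕ → G) × (ℕ → ℝ) => ω.2.1 n) μ
      = (Fintype.card G : ENNReal)⁻¹ • Measure.count) :
    MeasurePreserving (psiMap (⇑φ) t) μ μ ∧
    MeasurePreserving (psiMap (⇑φ.symm) t) μ μ :=
  ⟨measurePreserving_psiMap φ.injective t hindep hmargE hmargG,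
    measurePreserving_psiMap φ.symm.injective t hindep hmargE hmargG⟩

/-- Let `E`, `G` be finite nonempty sets, `φ : E × G → E × G` a
bijection, `λ > 0` and `t ≥ 0`.  On `Ω = E × G^ℕ × ℝ^ℕ`, let `μ` be the product
probability measure `μ_E ⊗ μ_G^{⊗ℕ} ⊗ ν_λ^{⊗ℕ}` (characterized by: all coordinates are
mutually independent, the `E`-coordinate is uniform on `E`, each `G`-coordinate is uniform
on `G`, and each `ℝ`-coordinate has the exponential law of rate `λ`).  Then `ψ_t` is
measurable and measure-preserving for `μ`, and so is the analogous map built from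
`φ⁻¹`. -/
theorem stmt12 {E G : Type} [Fintype E] [Fintype G] [Nonempty E] [Nonempty G]
    [DecidableEq E] [DecidableEq G]
    [mE : MeasurableSpace E] [MeasurableSingletonClass E]
    [mG : MeasurableSpace G] [MeasurableSingletonClass G]
    (φ : (E × G) ≃ (E × G)) (l t : ℝ) (hl : 0 < l) (ht : 0 ≤ t)
    (μ : Measure (E × (ℕ → G) × (ℕ → ℝ))) [IsProbabilityMeasure μ]
    (hindep : iIndepFun (m := coordMS E G) (coordFun E G) μ)
    (hmargE : Measure.map (fun ω : E × (ℕ → G) × (ℕ → ℝ) => ω.1) μ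
      = (Fintype.card E : ENNReal)⁻¹ • Measure.count)
    (hmargG : ∀ n : ℕ, Measure.map (fun ω : E × (ℕ → G) × (ℕ → ℝ) => ω.2.1 n) μ
      = (Fintype.card G : ENNReal)⁻¹ • Measure.count)
    (hmargR : ∀ n : ℕ, Measure.map (fun ω : E × (ℕ → G) × (ℕ → ℝ) => ω.2.2 n) μ
      = MeasureTheory.volume.withDensity
          (fun x => ENNReal.ofReal (if 0 ≤ x then l * Real.exp (-(l * x)) else 0))) :
    MeasurePreserving (psiMap (⇑φ) t) μ μ ∧
    MeasurePreserving (psiMap (⇑φ.symm) t) μ μ :=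
  stmt12_general (mE := mE) (mG := mG) φ t μ hindep hmargE hmargG
end

section
/- Let E and G be finite nonempty sets, φ : E × G → E × G a bijection with first component φᴱ, q a probability vector on G and λ > 0. For g, g' ∈ G let S_{gg'} be the complex E×E matrix with entries (S_{gg'})_{ij} = 1 if (i,g) = φ(j,g') and 0 otherwise, and define the linear map 𝓛 on complex E×E matrices by 𝓛(a) = λ( ∑_{g,g',g''∈G} √(q_{g'} q_{g''}) S_{gg'}^* a S_{gg''} − a ). Then for every f : E → ℂ, 𝓛(diag f) = diag(R f), where R = λ(P − I), P is the stochastic matrix with entries P_{ij} = ∑_{g∈G, φᴱ(i,g)=j} q_g, diag f is the diagonal matrix with entries f, and (R f)(i) = ∑_j R_{ij} f(j). -/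
open scoped Matrix

/-- The `E × E` block `S_{g g'}` of the permutation matrix of a bijection
`φ : E × G → E × G`: `(S_{g g'}) i j = 1` if `(i, g) = φ (j, g')`, else `0`. -/
def Sblock {E G : Type*} [DecidableEq E] [DecidableEq G]
    (φ : (E × G) ≃ (E × G)) (g g' : G) : Matrix E E ℂ :=
  Matrix.of fun i j => if (i, g) = φ (j, g') then (1 : ℂ) else 0

lemma Sblock_entry {E G : Type*} [Fintype E] [DecidableEq E] [DecidableEq G]
    (φ : (E × G) ≃ (E × G)) (g g' g'' : G) (f : E → ℂ) (i j : E) :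
    ((Sblock φ g g')ᴴ * Matrix.diagonal f * Sblock φ g g'') i j
      = if φ (i, g') = φ (j, g'') ∧ (φ (i, g')).2 = g then f (φ (i, g')).1 else 0 := by
  classical
  rw [Matrix.mul_apply]
  simp only [Matrix.mul_diagonal, Matrix.conjTranspose_apply, Sblock, Matrix.of_apply]
  have hterm : ∀ k : E, star (if ((k, g) : E × G) = φ (i, g') then (1:ℂ) else 0) * f k *
      (if ((k, g) : E × G) = φ (j, g'') then (1:ℂ) else 0)
      = if (k, g) = φ (i, g') ∧ (k, g) = φ (j, g'') then f k else 0 := by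
    intro k
    by_cases h1 : ((k, g) : E × G) = φ (i, g') <;>
      by_cases h2 : ((k, g) : E × G) = φ (j, g'') <;> simp [h1, h2]
  simp only [hterm]
  by_cases h : φ (i, g') = φ (j, g'') ∧ (φ (i, g')).2 = g
  · obtain ⟨h1, h2⟩ := h
    rw [if_pos ⟨h1, h2⟩]
    have hk : (((φ (i, g')).1, g) : E × G) = φ (i, g') := by
      rw [← h2]
    rw [Finset.sum_eq_single (φ (i, g')).1]
    · rw [if_pos ⟨hk, hk.trans h1⟩]
    · intro k _ hne
      rw [if_neg]
      intro hh
      exact hne (congrArg Prod.fst hh.1)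
    · intro hk'; exact absurd (Finset.mem_univ _) hk'
  · rw [if_neg h]
    apply Finset.sum_eq_zero
    intro k _
    rw [if_neg]
    intro hh
    exact h ⟨hh.1.symm.trans hh.2, by rw [← hh.1]⟩

/-- Let `φ : E × G → E × G` be a bijection with first component `φᴱ`,
`q` a probability vector on `G` and `λ > 0`.  The generator
`𝓛(a) = λ (∑_{g,g',g''} √(q_{g'} q_{g''}) S_{g g'}^* a S_{g g''} − a)` satisfies
`𝓛 (diag f) = diag (R f)` for every `f : E → ℂ`, where `R = λ (P − I)` and
`P i j = ∑_{g : φᴱ(i,g) = j} q g`. -/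
theorem stmt18 {E G : Type*} [Fintype E] [Fintype G] [Nonempty E] [Nonempty G]
    [DecidableEq E] [DecidableEq G]
    (φ : (E × G) ≃ (E × G))
    (q : G → ℝ) (hq0 : ∀ g, 0 ≤ q g) (hq1 : ∑ g, q g = 1)
    (l : ℝ) (hl : 0 < l) :
    ∀ f : E → ℂ,
      (l : ℂ) • ((∑ g : G, ∑ g' : G, ∑ g'' : G,
          (Real.sqrt (q g' * q g'') : ℂ) •
            ((Sblock φ g g')ᴴ * Matrix.diagonal f * Sblock φ g g''))
        - Matrix.diagonal f)
      = Matrix.diagonal (fun i => ∑ j,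
          (((l * ((∑ g : G, if (φ (i, g)).1 = j then q g else 0)
            - (if i = j then 1 else 0))) : ℝ) : ℂ) * f j) := by
  intro f
  ext i j
  simp only [Matrix.smul_apply, Matrix.sub_apply, Matrix.sum_apply, Sblock_entry,
    smul_eq_mul, Matrix.diagonal_apply, Equiv.apply_eq_iff_eq, Prod.mk.injEq]
  have h2 : ∀ x x1 : G, (∑ x2 : G, ((Real.sqrt (q x1 * q x2) : ℝ) : ℂ) *
      if (i = j ∧ x1 = x2) ∧ (φ (i, x1)).2 = x then f (φ (i, x1)).1 else 0)
      = if i = j ∧ (φ (i, x1)).2 = x then (q x1 : ℂ) * f (φ (i, x1)).1 else 0 := by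
    intro x x1
    rw [Finset.sum_eq_single x1]
    · by_cases h : i = j ∧ (φ (i, x1)).2 = x
      · rw [if_pos ⟨⟨h.1, rfl⟩, h.2⟩, if_pos h, Real.sqrt_mul_self (hq0 x1)]
      · rw [if_neg fun hh => h ⟨hh.1.1, hh.2⟩, mul_zero, if_neg h]
    · intro x2 _ hne
      rw [if_neg fun hh => hne hh.1.2.symm, mul_zero]
    · intro h; exact absurd (Finset.mem_univ _) h
  simp only [h2]
  have h3 : (∑ x : G, ∑ x1 : G,
      if i = j ∧ (φ (i, x1)).2 = x then (q x1 : ℂ) * f (φ (i, x1)).1 else 0)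
      = if i = j then ∑ x1 : G, (q x1 : ℂ) * f (φ (i, x1)).1 else 0 := by
    rw [Finset.sum_comm]
    by_cases hij : i = j
    · simp only [hij, true_and]
      refine Finset.sum_congr rfl fun x1 _ => ?_
      exact (Finset.sum_ite_eq Finset.univ _ _).trans (if_pos (Finset.mem_univ _))
    · simp [hij]
  rw [h3]
  by_cases hij : i = j
  · rw [if_pos hij, if_pos hij]
    subst hij
    have h4 : ∀ j' : E, (((l * ((∑ g : G, if (φ (i, g)).1 = j' then q g else 0)
        - (if i = j' then 1 else 0))) : ℝ) : ℂ) * f j'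
        = (l : ℂ) * ((∑ g : G, if (φ (i, g)).1 = j' then (q g : ℂ) * f j' else 0)
          - (if i = j' then f j' else 0)) := by
      intro j'
      push_cast [apply_ite (Complex.ofReal : ℝ → ℂ)]
      rw [mul_assoc, sub_mul, Finset.sum_mul]
      congr 2
      · exact Finset.sum_congr rfl fun g _ => by split_ifs <;> simp
      · split_ifs <;> simp
    simp only [h4]
    rw [← Finset.mul_sum, Finset.sum_sub_distrib, Finset.sum_comm]
    congr 2
    · refine Finset.sum_congr rfl fun g _ => ?_
      symm
      exact (Finset.sum_ite_eq Finset.univ (φ (i, g)).1 fun x => (q g : ℂ) * f x).trans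
        (if_pos (Finset.mem_univ _))
    · symm
      exact (Finset.sum_ite_eq Finset.univ i f).trans (if_pos (Finset.mem_univ _))
  · rw [if_neg hij, if_neg hij, if_neg hij]
    simp
end

section
/- Let E be a finite nonempty set and R a transition rate matrix on E. Then there exist a finite index set Z and a family (R_z)_{z∈Z} of complex E×E matrices such that the linear map 𝓛(a) = ∑_{z∈Z} ( R_z^* a R_z − ½(R_z^* R_z a + a R_z^* R_z) ) satisfies 𝓛(diag f) = diag(R f) for every f : E → ℂ, where diag f is the diagonal matrix with entries f and (R f)(i) = ∑_j R_{ij} f(j); in other words, every classical Markov semigroup generator on E extends to a Lindblad generator (with Hamiltonian H = 0) on the complex E×E matrices. -/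
open scoped Matrix

lemma diag_mul_std {E : Type*} [Fintype E] [DecidableEq E] (f : E → ℂ) (a b : E) (c : ℂ) :
    Matrix.diagonal f * Matrix.single a b c = Matrix.single a b (f a * c) := by
  ext k l
  simp [Matrix.single, Matrix.diagonal_mul, Matrix.of_apply, ite_and]
  split_ifs with h1 h2 <;> simp_all

lemma std_mul_diag {E : Type*} [Fintype E] [DecidableEq E] (f : E → ℂ) (a b : E) (c : ℂ) :
    Matrix.single a b c * Matrix.diagonal f = Matrix.single a b (c * f b) := by
  ext k l
  simp [Matrix.single, Matrix.mul_diagonal, Matrix.of_apply, ite_and]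
  split_ifs with h1 h2 <;> simp_all

lemma std_conjT {E : Type*} [Fintype E] [DecidableEq E] (a b : E) (c : ℂ) :
    (Matrix.single a b c)ᴴ = Matrix.single b a (starRingEnd ℂ c) := by
  ext k l
  simp [Matrix.single, Matrix.conjTranspose_apply, ite_and, and_comm]
  split_ifs with h1 h2 <;> simp_all

lemma term_eq {E : Type*} [Fintype E] [DecidableEq E] (c : ℂ) (i j : E) (f : E → ℂ) :
    (c • Matrix.single j i 1)ᴴ * Matrix.diagonal f * (c • Matrix.single j i 1)
      - (1 / 2 : ℂ) • ((c • Matrix.single j i 1)ᴴ * (c • Matrix.single j i 1) * Matrix.diagonal f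
          + Matrix.diagonal f * ((c • Matrix.single j i 1)ᴴ * (c • Matrix.single j i 1)))
    = Matrix.single i i ((starRingEnd ℂ c) * c * (f j - f i)) := by
  rw [Matrix.conjTranspose_smul, std_conjT]
  simp only [Matrix.smul_mul, Matrix.mul_smul, std_mul_diag, diag_mul_std,
    Matrix.single_mul_single_same, Matrix.smul_single, smul_eq_mul, smul_smul]
  ext k l
  by_cases h : i = k ∧ i = l
  · obtain ⟨h1, h2⟩ := h
    subst h1; subst h2
    simp [Matrix.single_apply_same]
    ring
  · simp [Matrix.single_apply_of_ne _ _ _ _ _ h]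

lemma sum_std_diag {E : Type*} [Fintype E] [DecidableEq E] (g : E → ℂ) :
    ∑ i : E, Matrix.single i i (g i) = Matrix.diagonal g := by
  ext k l
  simp [Matrix.sum_apply, Matrix.single, Matrix.diagonal_apply, ite_and,
    Finset.sum_ite_eq, eq_comm]

/-- Let `R` be a transition rate matrix on a finite nonempty set `E`.
Then there exist a finite index set `Z` and a family `(R_z)_{z ∈ Z}` of complex `E × E`
matrices such that the Lindblad generator (with Hamiltonian `H = 0`)
`𝓛(a) = ∑_z (R_z^* a R_z − ½ (R_z^* R_z a + a R_z^* R_z))` satisfies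
`𝓛 (diag f) = diag (R f)` for every `f : E → ℂ`. -/
theorem stmt19 {E : Type*} [Fintype E] [Nonempty E] [DecidableEq E]
    (R : Matrix E E ℝ)
    (hR_offdiag : ∀ i j, i ≠ j → 0 ≤ R i j)
    (hR_rowsum : ∀ i, ∑ j, R i j = 0) :
    ∃ (Z : Type) (instZ : Fintype Z) (Rop : Z → Matrix E E ℂ),
      ∀ f : E → ℂ,
        (∑ z ∈ @Finset.univ Z instZ,
          ((Rop z)ᴴ * Matrix.diagonal f * Rop z
            - (1 / 2 : ℂ) • ((Rop z)ᴴ * Rop z * Matrix.diagonal f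
                + Matrix.diagonal f * ((Rop z)ᴴ * Rop z))))
        = Matrix.diagonal (fun i => ∑ j, (R i j : ℂ) * f j) := by
  classical
  set n := Fintype.card E
  set e : Fin n ≃ E := (Fintype.equivFin E).symm with he
  refine ⟨Fin n × Fin n, inferInstance, fun p =>
    ((Real.sqrt (R (e p.1) (e p.2)) : ℝ) : ℂ) • Matrix.single (e p.2) (e p.1) 1, ?_⟩
  intro f
  have key : ∀ p : Fin n × Fin n,
      (((Real.sqrt (R (e p.1) (e p.2)) : ℝ) : ℂ) • Matrix.single (e p.2) (e p.1) 1)ᴴ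
          * Matrix.diagonal f
          * (((Real.sqrt (R (e p.1) (e p.2)) : ℝ) : ℂ) • Matrix.single (e p.2) (e p.1) 1)
        - (1 / 2 : ℂ) • ((((Real.sqrt (R (e p.1) (e p.2)) : ℝ) : ℂ) • Matrix.single (e p.2) (e p.1) 1)ᴴ
              * (((Real.sqrt (R (e p.1) (e p.2)) : ℝ) : ℂ) • Matrix.single (e p.2) (e p.1) 1)
              * Matrix.diagonal f
            + Matrix.diagonal f
              * ((((Real.sqrt (R (e p.1) (e p.2)) : ℝ) : ℂ) • Matrix.single (e p.2) (e p.1) 1)ᴴ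
                * (((Real.sqrt (R (e p.1) (e p.2)) : ℝ) : ℂ) • Matrix.single (e p.2) (e p.1) 1)))
      = Matrix.single (e p.1) (e p.1)
          ((R (e p.1) (e p.2) : ℂ) * (f (e p.2) - f (e p.1))) := by
    intro p
    rw [term_eq]
    congr 1
    rcases eq_or_ne (e p.1) (e p.2) with h | h
    · rw [← h]; ring
    · have hnn : 0 ≤ R (e p.1) (e p.2) := hR_offdiag _ _ h
      rw [Complex.conj_ofReal, ← Complex.ofReal_mul, Real.mul_self_sqrt hnn]
  rw [Finset.sum_congr rfl (fun p _ => key p)]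
  rw [Fintype.sum_equiv (Equiv.prodCongr e e)
    (fun p : Fin n × Fin n =>
      Matrix.single (e p.1) (e p.1) ((R (e p.1) (e p.2) : ℂ) * (f (e p.2) - f (e p.1))))
    (fun q : E × E => Matrix.single q.1 q.1 ((R q.1 q.2 : ℂ) * (f q.2 - f q.1)))
    (fun p => rfl)]
  rw [Fintype.sum_prod_type]
  have hinner : ∀ i : E, ∑ j : E, Matrix.single i i ((R i j : ℂ) * (f j - f i))
      = Matrix.single i i (∑ j : E, (R i j : ℂ) * (f j - f i)) := by
    intro i
    ext k l
    simp [Matrix.sum_apply, Matrix.single, ite_and]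
  rw [Finset.sum_congr rfl (fun i _ => hinner i)]
  have hcoef : ∀ i : E, (∑ j : E, (R i j : ℂ) * (f j - f i)) = ∑ j : E, (R i j : ℂ) * f j := by
    intro i
    have h0 : (∑ j : E, (R i j : ℂ)) = 0 := by
      rw [← Complex.ofReal_sum, hR_rowsum i, Complex.ofReal_zero]
    calc ∑ j : E, (R i j : ℂ) * (f j - f i)
        = (∑ j : E, (R i j : ℂ) * f j) - (∑ j : E, (R i j : ℂ)) * f i := by
          simp [mul_sub, Finset.sum_sub_distrib, Finset.sum_mul]
      _ = ∑ j : E, (R i j : ℂ) * f j := by rw [h0]; ring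
  rw [Finset.sum_congr rfl (fun i _ => by rw [hcoef i])]
  exact sum_std_diag _
end
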